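/- arXiv:1905.10287 — 5 statements merged into one kernel-verified Lean document; each statement's English description precedes it below -/
import Mathlib

section
/- Let Φ be one of the symbols Ω, Γ and Ψ one of the symbols 𝒪, Ω, Γ, with the couple ⟨Φ,Ψ⟩ different from ⟨Ω,𝒪⟩, and let X be an infinite Hausdorff topological space. Then X is an S₁(Φ,Ψ)-space if and only if for every h ∈ USC*_p(X) the family USC*_p(X) satisfies the selection principle S₁(Φ_h,Ψ_h). If moreover X possesses property (ε), the equivalence holds also for the couple ⟨Ω,𝒪⟩. -/
open Set Filter Topology

namespace Selectors

variable {X : Type*}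

/-- Kinds of covers / of pointwise properties: `o` (ordinary covers / 𝒪),
`omega` (ω-covers / Ω), `gamma` (γ-covers / Γ). -/
inductive CoverKind : Type
  | o | omega | gamma

/-- `f` is a bounded upper semicontinuous real function on `X`. -/
def IsUSCb [TopologicalSpace X] (f : X → ℝ) : Prop :=
  (∀ a : ℝ, IsOpen {x | f x < a}) ∧ ∃ M : ℝ, ∀ x, |f x| ≤ M

/-- `USC*_p(X)`: the set of bounded upper semicontinuous real functions on `X`,
regarded as a subset of `X → ℝ` with the product (pointwise convergence) topology. -/
def USCb (X : Type*) [TopologicalSpace X] : Set (X → ℝ) := {f | IsUSCb f}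

/-- `C*_p(X)`: the set of bounded continuous real functions on `X`. -/
def Cb (X : Type*) [TopologicalSpace X] : Set (X → ℝ) :=
  {f | Continuous f ∧ ∃ M : ℝ, ∀ x, |f x| ≤ M}

/-- `𝒰` is a cover of `X`. -/
def IsCover (𝒰 : Set (Set X)) : Prop := ∀ x : X, ∃ U ∈ 𝒰, x ∈ U

/-- The (not necessarily open) cover condition of the given kind:
an `o`-cover is a cover; an ω-cover is a cover not containing `X` such that every
finite subset of `X` is contained in a member; a γ-cover is an infinite cover such
that each point belongs to all but finitely many members. -/
def kindSets (k : CoverKind) (𝒰 : Set (Set X)) : Prop :=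
  match k with
  | .o => IsCover 𝒰
  | .omega => IsCover 𝒰 ∧ Set.univ ∉ 𝒰 ∧ ∀ F : Set X, F.Finite → ∃ U ∈ 𝒰, F ⊆ U
  | .gamma => IsCover 𝒰 ∧ 𝒰.Infinite ∧ ∀ x : X, {U ∈ 𝒰 | x ∉ U}.Finite

/-- The family `𝒪(X)`, `Ω(X)` or `Γ(X)` of open covers/ω-covers/γ-covers of `X`. -/
def OpenKindCovers (X : Type*) [TopologicalSpace X] (k : CoverKind) : Set (Set (Set X)) :=
  {𝒰 | (∀ U ∈ 𝒰, IsOpen U) ∧ kindSets k 𝒰}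

/-- The selection principle `S₁(A, B)`. -/
def S1 {α : Type*} (A B : Set (Set α)) : Prop :=
  ∀ u : ℕ → Set α, (∀ n, u n ∈ A) →
    ∃ sel : ℕ → α, (∀ n, sel n ∈ u n) ∧ Set.range sel ∈ B

/-- The selection principle `S_fin(A, B)`. -/
def Sfin {α : Type*} (A B : Set (Set α)) : Prop :=
  ∀ u : ℕ → Set α, (∀ n, u n ∈ A) →
    ∃ V : ℕ → Set α, (∀ n, V n ⊆ u n ∧ (V n).Finite) ∧ (⋃ n, V n) ∈ B

/-- Property `(𝒪_h)` of a family `F` of real functions. -/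
def PropO (h : X → ℝ) (F : Set (X → ℝ)) : Prop :=
  ∀ x : X, h x ∈ closure ((fun f : X → ℝ => f x) '' F)

/-- Property `(Ω_h)`: `h ∉ F` and `h` belongs to the closure of `F` in `ℝ^X`. -/
def PropOmega (h : X → ℝ) (F : Set (X → ℝ)) : Prop :=
  h ∉ F ∧ h ∈ closure F

/-- Property `(Γ_h)`. -/
def PropGamma (h : X → ℝ) (F : Set (X → ℝ)) : Prop :=
  F.Infinite ∧ ∀ ε : ℝ, 0 < ε → ∀ x : X, {f ∈ F | ε ≤ |f x - h x|}.Finite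

/-- Property `(Φ_h)` for `Φ = 𝒪, Ω, Γ`. -/
def kindProp (k : CoverKind) (h : X → ℝ) (F : Set (X → ℝ)) : Prop :=
  match k with
  | .o => PropO h F
  | .omega => PropOmega h F
  | .gamma => PropGamma h F

/-- The family `Φ_h(H) = {F ⊆ H : F has (Φ_h) and ∀ f ∈ F, f ≥ h ∧ f - h ∈ H}`. -/
def PhiH (k : CoverKind) (h : X → ℝ) (H : Set (X → ℝ)) : Set (Set (X → ℝ)) :=
  {F | F ⊆ H ∧ kindProp k h F ∧ ∀ f ∈ F, h ≤ f ∧ f - h ∈ H}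

/-- `F ⊆ H` is sequentially dense in `H` (with respect to pointwise convergence). -/
def SeqDenseIn (F H : Set (X → ℝ)) : Prop :=
  F ⊆ H ∧ ∀ f ∈ H, ∃ u : ℕ → (X → ℝ), (∀ n, u n ∈ F) ∧
    Filter.Tendsto u Filter.atTop (nhds f)

/-- `F ⊆ H` is dense in `H`. -/
def DenseIn (F H : Set (X → ℝ)) : Prop :=
  F ⊆ H ∧ H ⊆ closure F

/-- `F` is pointwise dense: `{f x : f ∈ F}` is dense in `ℝ` for every `x`. -/
def PointwiseDense (F : Set (X → ℝ)) : Prop :=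
  ∀ x : X, Dense {y : ℝ | ∃ f ∈ F, f x = y}

/-- `F ⊆ H` is upper sequentially dense in `H`. -/
def UpperSeqDenseIn (F H : Set (X → ℝ)) : Prop :=
  F ⊆ H ∧ ∀ f ∈ H, ∃ u : ℕ → (X → ℝ),
    (∀ n, u n ∈ F ∧ f ≤ u n ∧ u n - f ∈ H) ∧
    Filter.Tendsto u Filter.atTop (nhds f)

/-- `F ⊆ H` is upper dense in `H`: for every `f ∈ H` the set
`{h ∈ F : h ≥ f ∧ h - f ∈ H}` is dense in `{h ∈ H : h ≥ f}`. -/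
def UpperDenseIn (F H : Set (X → ℝ)) : Prop :=
  F ⊆ H ∧ ∀ f ∈ H, {g | g ∈ H ∧ f ≤ g} ⊆ closure {g | g ∈ F ∧ f ≤ g ∧ g - f ∈ H}

/-- `𝒮(H)`: the family of sequentially dense subsets of `H`. -/
def Sfam (H : Set (X → ℝ)) : Set (Set (X → ℝ)) := {F | SeqDenseIn F H}

/-- `𝒟(H)`: the family of dense subsets of `H`. -/
def Dfam (H : Set (X → ℝ)) : Set (Set (X → ℝ)) := {F | DenseIn F H}

/-- `𝒫(H)`: the family of pointwise dense subsets of `H`. -/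
def Pfam (H : Set (X → ℝ)) : Set (Set (X → ℝ)) := {F | F ⊆ H ∧ PointwiseDense F}

/-- `Φ̃↑(H)`: for `Φ = Γ` the upper sequentially dense subsets, for `Φ = Ω`
the upper dense subsets, for `Φ = 𝒪` the pointwise dense subsets of `H`. -/
def upTilde (k : CoverKind) (H : Set (X → ℝ)) : Set (Set (X → ℝ)) :=
  match k with
  | .o => Pfam H
  | .omega => {F | UpperDenseIn F H}
  | .gamma => {F | UpperSeqDenseIn F H}

/-- `H` is separable: it has a countable dense subset. -/
def SeparableSet (H : Set (X → ℝ)) : Prop := ∃ D, D.Countable ∧ DenseIn D H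

/-- `H` is sequentially separable: it has a countable sequentially dense subset. -/
def SeqSeparableSet (H : Set (X → ℝ)) : Prop := ∃ D, D.Countable ∧ SeqDenseIn D H

/-- Property `(ε)`: every open ω-cover contains a countable ω-subcover. -/
def PropEps (X : Type*) [TopologicalSpace X] : Prop :=
  ∀ 𝒰 : Set (Set X), 𝒰 ∈ OpenKindCovers X CoverKind.omega →
    ∃ 𝒱 ⊆ 𝒰, 𝒱.Countable ∧ 𝒱 ∈ OpenKindCovers X CoverKind.omega

/-- `S` is an `F_σ` set with respect to the topology `t`. -/
def IsFsigmaIn (t : TopologicalSpace X) (S : Set X) : Prop :=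
  ∃ C : ℕ → Set X, (∀ n, IsClosed[t] (C n)) ∧ S = ⋃ n, C n

/-- `S` is locally closed with respect to `t`: an intersection of a `t`-open
and a `t`-closed set. -/
def IsLocallyClosedIn (t : TopologicalSpace X) (S : Set X) : Prop :=
  ∃ U F : Set X, IsOpen[t] U ∧ IsClosed[t] F ∧ S = U ∩ F

/-- `S` is a cozero set with respect to `t`. -/
def IsCozeroIn (t : TopologicalSpace X) (S : Set X) : Prop :=
  ∃ f : X → ℝ, @Continuous X ℝ t inferInstance f ∧ S = {x | f x ≠ 0}

/-- The `OB`-property of `⟨X, t⟩`: there is a separable metrizable topology `t'`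
on `X` weaker than `t` such that every locally closed subset of `⟨X, t⟩` is an
`F_σ`-set in `t'`. -/
def OBProperty (X : Type*) [t : TopologicalSpace X] : Prop :=
  ∃ t' : TopologicalSpace X,
    (∀ s : Set X, IsOpen[t'] s → IsOpen[t] s) ∧
    @TopologicalSpace.MetrizableSpace X t' ∧
    @TopologicalSpace.SeparableSpace X t' ∧
    ∀ S : Set X, IsLocallyClosedIn t S → IsFsigmaIn t' S

/-- The `V`-property of `⟨X, t⟩`: there is a separable metrizable topology `t'`
on `X` weaker than `t` such that every cozero subset of `⟨X, t⟩` is an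
`F_σ`-set in `t'`. -/
def VProperty (X : Type*) [t : TopologicalSpace X] : Prop :=
  ∃ t' : TopologicalSpace X,
    (∀ s : Set X, IsOpen[t'] s → IsOpen[t] s) ∧
    @TopologicalSpace.MetrizableSpace X t' ∧
    @TopologicalSpace.SeparableSpace X t' ∧
    ∀ S : Set X, IsCozeroIn t S → IsFsigmaIn t' S

/-- `iw(X) = ℵ₀`: `X` can be mapped by a one-to-one continuous map onto a
Tychonoff space of countable weight. -/
def IWCountable (X : Type*) [TopologicalSpace X] : Prop :=
  ∃ (Y : Type) (tY : TopologicalSpace Y) (f : X → Y),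
    @Continuous X Y _ tY f ∧ Function.Bijective f ∧
    @T35Space Y tY ∧ @SecondCountableTopology Y tY

/-- `Φ^sh(X)`: the family of open shrinkable φ-covers of `X`. -/
def ShFam (X : Type*) [TopologicalSpace X] (k : CoverKind) : Set (Set (Set X)) :=
  {𝒰 | 𝒰 ∈ OpenKindCovers X k ∧
    ∃ 𝒲 ∈ OpenKindCovers X k, ∀ W ∈ 𝒲, ∃ U ∈ 𝒰, closure W ⊆ U}

/-- A zero set. -/
def IsZeroSet [TopologicalSpace X] (S : Set X) : Prop :=
  ∃ f : X → ℝ, Continuous f ∧ S = {x | f x = 0}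

/-- A cozero set. -/
def IsCozeroSet [TopologicalSpace X] (S : Set X) : Prop :=
  ∃ f : X → ℝ, Continuous f ∧ S = {x | f x ≠ 0}

/-- `Φ^fsh_cz(X)`: the family of functionally shrinkable φ-covers of `X`
consisting of cozero sets. -/
def FshCzFam (X : Type*) [TopologicalSpace X] (k : CoverKind) : Set (Set (Set X)) :=
  {𝒰 | (∀ U ∈ 𝒰, IsCozeroSet U) ∧ kindSets k 𝒰 ∧
    ∃ 𝒲 : Set (Set X), (∀ W ∈ 𝒲, IsZeroSet W) ∧ kindSets k 𝒲 ∧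
      ∀ W ∈ 𝒲, ∃ U ∈ 𝒰, closure W ⊆ U}

/-- The function `f_{U,g}`: equal to `0` on `U` and to `1 + sup |g|` off `U`. -/
noncomputable def fU (U : Set X) (g : X → ℝ) : X → ℝ :=
  Uᶜ.indicator fun _ => 1 + ⨆ y, |g y|

/-- The family `S(𝒰) = {f_{U,g} + g : U ∈ 𝒰, g ∈ USC*_p(X)}`. -/
def SU [TopologicalSpace X] (𝒰 : Set (Set X)) : Set (X → ℝ) :=
  {f | ∃ U ∈ 𝒰, ∃ g ∈ USCb X, f = fU U g + g}

/-- The Sorgenfrey topology on `ℝ`, generated by the half-open intervals `[a, b)`. -/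
def sorgenfreyTop : TopologicalSpace ℝ :=
  TopologicalSpace.generateFrom {s | ∃ a b : ℝ, s = Set.Ico a b}

/-- The Sorgenfrey plane topology on `ℝ × ℝ`. -/
def sorgenfreyPlaneTop : TopologicalSpace (ℝ × ℝ) :=
  @instTopologicalSpaceProd ℝ ℝ sorgenfreyTop sorgenfreyTop

/-!
A family `F ∈ Φ_h` gives, for every `ε > 0`, the open family of sets `{f - h < ε}`, `f ∈ F \ {h}`,
which is a `Φ`-cover unless it contains `X`. Conversely a `Φ`-cover `𝒰` gives the family in `Φ_0`
of the functions vanishing on some `U ∈ 𝒰` and equal to `1` off `U`, and selections correspond.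
In the forward direction one selects from the `n`-th family with `ε = 1 / (n + 1)`, taking `X`
itself whenever it is available; the selected functions then converge to `h` in the manner `Ψ`
provided the selected sets cover `X` in the manner `Ψ` along `n → ∞`. `S₁(Φ, Ψ)` provides such
selections: for `Ψ = 𝒪` by selecting along infinitely many disjoint subsequences, and for `Ψ = Γ`
after making the selection finite-to-one.
-/

theorem mem_closure_pi_iff_dist {ι α : Type*} [PseudoMetricSpace α] {F : Set (ι → α)}
    {h : ι → α} :
    h ∈ closure F ↔ ∀ S : Set ι, S.Finite → ∀ δ > 0, ∃ f ∈ F, ∀ i ∈ S, dist (f i) (h i) < δ := by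
  have hbasis := nhds_pi (a := h) ▸
    hasBasis_pi_same_index (fun i => Metric.nhds_basis_ball (x := h i)) fun I k hI hk => by
      obtain ⟨δ, hδ, hδk⟩ := ((eventually_all_finite hI).2 fun i hi =>
        eventually_of_mem (Ioc_mem_nhdsGT (hk i hi)) fun _ hδ => hδ.2).and
          self_mem_nhdsWithin |>.exists
      exact ⟨δ, hδk, fun i hi => Metric.ball_subset_ball (hδ i hi)⟩
  rw [mem_closure_iff_nhds_basis hbasis]
  simp only [Set.mem_pi, Metric.mem_ball, Prod.forall, and_imp]
  exact ⟨fun H S hS δ hδ => H S δ hS hδ, fun H S δ hS hδ => H S hS δ hδ⟩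

section CoverCombinatorics

theorem isCover_of_forall_finite_subset {𝒰 : Set (Set X)}
    (hω : ∀ S : Set X, S.Finite → ∃ U ∈ 𝒰, S ⊆ U) : IsCover 𝒰 := fun x =>
  let ⟨U, hU, hxU⟩ := hω {x} (finite_singleton x)
  ⟨U, hU, singleton_subset_iff.1 hxU⟩

theorem kindSets_omega_of {𝒰 : Set (Set X)} (huniv : univ ∉ 𝒰)
    (hω : ∀ S : Set X, S.Finite → ∃ U ∈ 𝒰, S ⊆ U) : kindSets .omega 𝒰 :=
  ⟨isCover_of_forall_finite_subset hω, huniv, hω⟩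

theorem kindSets_gamma_of {𝒰 : Set (Set X)} (hinf : 𝒰.Infinite)
    (hγ : ∀ x, {U ∈ 𝒰 | x ∉ U}.Finite) : kindSets .gamma 𝒰 := by
  refine ⟨fun x => ?_, hinf, hγ⟩
  obtain ⟨U, ⟨hU, hxU⟩⟩ := (hinf.sdiff (hγ x)).nonempty
  exact ⟨U, hU, by_contra fun hx => hxU ⟨hU, hx⟩⟩

theorem kindSets_gamma_of_subset {𝒰 𝒱 : Set (Set X)} (h𝒰 : kindSets .gamma 𝒰) (hsub : 𝒱 ⊆ 𝒰)
    (hinf : 𝒱.Infinite) : kindSets .gamma 𝒱 :=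
  kindSets_gamma_of hinf fun x => (h𝒰.2.2 x).subset fun _ hU => ⟨hsub hU.1, hU.2⟩

theorem kindSets_omega_of_gamma {𝒰 : Set (Set X)} (h𝒰 : kindSets .gamma 𝒰) (huniv : univ ∉ 𝒰) :
    kindSets .omega 𝒰 := by
  refine kindSets_omega_of huniv fun S hS => ?_
  obtain ⟨U, hU, hSU⟩ := (h𝒰.2.1.sdiff (hS.biUnion fun x _ => h𝒰.2.2 x)).nonempty
  exact ⟨U, hU, fun x hx => by_contra fun hxU => hSU (mem_biUnion hx ⟨hU, hxU⟩)⟩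

/-- Points `x V ∉ V` chosen for the members `V` of `𝒱`, together with `S`, must lie in a
member of `𝒰`, and that member cannot belong to `𝒱`. -/
theorem exists_mem_notMem_subset {𝒰 𝒱 : Set (Set X)}
    (hω : ∀ S : Set X, S.Finite → ∃ U ∈ 𝒰, S ⊆ U) (h𝒱 : 𝒱.Finite) (huniv : univ ∉ 𝒱)
    {S : Set X} (hS : S.Finite) : ∃ U ∈ 𝒰, U ∉ 𝒱 ∧ S ⊆ U := by
  have hpt : ∀ V : 𝒱, ∃ x, x ∉ (V : Set X) := fun V =>
    ne_univ_iff_exists_notMem _ |>.1 fun hV => huniv (hV ▸ V.2)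
  choose x hx using hpt
  have := h𝒱.to_subtype
  obtain ⟨U, hU, hSU⟩ := hω (S ∪ range x) (hS.union (finite_range x))
  exact ⟨U, hU, fun hU𝒱 => hx ⟨U, hU𝒱⟩ (hSU (Or.inr ⟨⟨U, hU𝒱⟩, rfl⟩)),
    subset_union_left.trans hSU⟩

theorem infinite_of_forall_finite_subset {𝒰 : Set (Set X)} (huniv : univ ∉ 𝒰)
    (hω : ∀ S : Set X, S.Finite → ∃ U ∈ 𝒰, S ⊆ U) : 𝒰.Infinite := fun hfin =>
  let ⟨_, hU, hU𝒰, _⟩ := exists_mem_notMem_subset hω hfin huniv finite_empty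
  hU𝒰 hU

theorem frequently_subset_of_kindSets_omega {U : ℕ → Set X} (hU : kindSets .omega (range U))
    {S : Set X} (hS : S.Finite) : ∃ᶠ n in atTop, S ⊆ U n := by
  refine frequently_atTop.2 fun N => ?_
  obtain ⟨_, ⟨n, rfl⟩, hnN, hSU⟩ := exists_mem_notMem_subset hU.2.2 ((finite_Iio N).image U)
    (fun h => hU.2.1 (image_subset_range U _ h)) hS
  exact ⟨n, not_lt.1 fun hn => hnN (mem_image_of_mem U hn), hSU⟩

end CoverCombinatorics

/-- Unlike `range U ∈ OpenKindCovers X k`, this refers to the indices `n → ∞`, which is what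
survives the passage to functions `f n` with `U n = {f n - h < 1 / (n + 1)}`. -/
def SeqCovers (k : CoverKind) (U : ℕ → Set X) : Prop :=
  match k with
  | .o => ∀ x, ∃ᶠ n in atTop, x ∈ U n
  | .omega => ∀ S : Set X, S.Finite → ∃ᶠ n in atTop, S ⊆ U n
  | .gamma => ∀ x, ∀ᶠ n in atTop, x ∈ U n

theorem SeqCovers.mono {k : CoverKind} {U V : ℕ → Set X} (hU : SeqCovers k U)
    (hUV : ∀ n, U n ⊆ V n) : SeqCovers k V := by
  cases k
  · exact fun x => (hU x).mono fun n hn => hUV n hn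
  · exact fun S hS => (hU S hS).mono fun n hn => hn.trans (hUV n)
  · exact fun x => (hU x).mono fun n hn => hUV n hn

theorem seqCovers_const_univ (k : CoverKind) : SeqCovers k (fun _ => (univ : Set X)) := by
  cases k
  · exact fun _ => Frequently.of_forall fun _ => mem_univ _
  · exact fun _ _ => Frequently.of_forall fun _ => subset_univ _
  · exact fun _ => Eventually.of_forall fun _ => mem_univ _

section Selection

variable [TopologicalSpace X] {𝒰 : ℕ → Set (Set X)}

/-- Applying `S₁` separately along each row `i ↦ Nat.pair j i` covers every point at an index
`≥ j`, for every `j`. -/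
theorem exists_frequently_mem_of_S1 {𝒜 : Set (Set (Set X))} (hS1 : S1 𝒜 (OpenKindCovers X .o))
    (h𝒰 : ∀ n, 𝒰 n ∈ 𝒜) : ∃ U : ℕ → Set X, (∀ n, U n ∈ 𝒰 n) ∧ SeqCovers .o U := by
  choose V hV hcov using fun j => hS1 (fun i => 𝒰 (Nat.pair j i)) fun i => h𝒰 _
  refine ⟨fun n => V n.unpair.1 n.unpair.2, fun n => by simpa using hV n.unpair.1 n.unpair.2,
    fun x => frequently_atTop.2 fun j => ?_⟩
  obtain ⟨_, ⟨i, rfl⟩, hx⟩ := (hcov j).2 x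
  exact ⟨Nat.pair j i, Nat.left_le_pair j i, by simpa using hx⟩

theorem exists_frequently_subset_of_S1 {𝒜 : Set (Set (Set X))}
    (hS1 : S1 𝒜 (OpenKindCovers X .omega)) (h𝒰 : ∀ n, 𝒰 n ∈ 𝒜) :
    ∃ U : ℕ → Set X, (∀ n, U n ∈ 𝒰 n) ∧ SeqCovers .omega U :=
  let ⟨U, hU, hcov⟩ := hS1 𝒰 h𝒰
  ⟨U, hU, fun _ hS => frequently_subset_of_kindSets_omega hcov.2 hS⟩

theorem mem_openKindCovers_of_kindSets_gamma {Φ : CoverKind}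
    (hΦ : Φ = .omega ∨ Φ = .gamma) {𝒱 : Set (Set X)} (hopen : ∀ V ∈ 𝒱, IsOpen V)
    (hγ : kindSets .gamma 𝒱) (huniv : univ ∉ 𝒱) : 𝒱 ∈ OpenKindCovers X Φ := by
  rcases hΦ with rfl | rfl
  exacts [⟨hopen, kindSets_omega_of_gamma hγ huniv⟩, ⟨hopen, hγ⟩]

/-- The selection has to be finite-to-one. `S₁` applied to a constant sequence yields countable
γ-subcovers, all enumerated by one sequence `c`; at stage `n` the sets `c m`, `m < n`, are removed,
so that each set can be selected only finitely often. -/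
theorem exists_eventually_mem_of_S1 {Φ : CoverKind} (hΦ : Φ = .omega ∨ Φ = .gamma)
    (hS1 : S1 (OpenKindCovers X Φ) (OpenKindCovers X .gamma))
    (h𝒰 : ∀ n, 𝒰 n ∈ OpenKindCovers X Φ) (huniv : ∀ n, univ ∉ 𝒰 n) :
    ∃ U : ℕ → Set X, (∀ n, U n ∈ 𝒰 n) ∧ SeqCovers .gamma U := by
  choose g hg hgγ using fun n => hS1 (fun _ => 𝒰 n) fun _ => h𝒰 n
  set c : ℕ → Set X := fun m => g m.unpair.1 m.unpair.2
  set 𝒱 : ℕ → Set (Set X) := fun n => range (g n) \ c '' Iio n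
  have h𝒱𝒰 : ∀ n, 𝒱 n ⊆ 𝒰 n := by
    rintro n _ ⟨⟨i, rfl⟩, -⟩
    exact hg n i
  have h𝒱 : ∀ n, 𝒱 n ∈ OpenKindCovers X Φ := fun n =>
    mem_openKindCovers_of_kindSets_gamma hΦ (fun V hV => (h𝒰 n).1 V (h𝒱𝒰 n hV))
      (kindSets_gamma_of_subset (hgγ n).2 sdiff_subset
        ((hgγ n).2.2.1.sdiff ((finite_Iio n).image c)))
      fun h => huniv n (h𝒱𝒰 n h)
  obtain ⟨U, hU, hUγ⟩ := hS1 𝒱 h𝒱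
  have hfib : ∀ V, (U ⁻¹' {V}).Finite := by
    intro V
    rcases (U ⁻¹' {V}).eq_empty_or_nonempty with he | ⟨n₀, rfl⟩
    · simp [he]
    obtain ⟨i, hi⟩ := (hU n₀).1
    refine (finite_Iic (Nat.pair n₀ i)).subset fun n (hn : U n = U n₀) => ?_
    exact not_lt.1 fun hlt => (hU n).2 ⟨Nat.pair n₀ i, mem_Iio.2 hlt, by simp [c, hi, hn]⟩
  refine ⟨U, fun n => h𝒱𝒰 n (hU n), fun x => ?_⟩
  rw [← Nat.cofinite_eq_atTop, eventually_cofinite]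
  exact ((hUγ.2.2.2 x).preimage' fun V _ => hfib V).subset fun n hn => ⟨mem_range_self n, hn⟩

theorem exists_seqCovers_of_S1 {Φ Ψ : CoverKind} (hΦ : Φ = .omega ∨ Φ = .gamma)
    (hS1 : S1 (OpenKindCovers X Φ) (OpenKindCovers X Ψ))
    (h𝒰 : ∀ n, 𝒰 n ∈ OpenKindCovers X Φ) (huniv : ∀ n, univ ∉ 𝒰 n) :
    ∃ U : ℕ → Set X, (∀ n, U n ∈ 𝒰 n) ∧ SeqCovers Ψ U := by
  cases Ψ
  exacts [exists_frequently_mem_of_S1 hS1 h𝒰, exists_frequently_subset_of_S1 hS1 h𝒰,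
    exists_eventually_mem_of_S1 hΦ hS1 h𝒰 huniv]

/-- Families containing `univ` are replaced by one that does not, and afterwards `univ` is selected
from them. -/
theorem exists_seqCovers_of_S1_of_univ_mem_or {Φ Ψ : CoverKind} (hΦ : Φ = .omega ∨ Φ = .gamma)
    (hS1 : S1 (OpenKindCovers X Φ) (OpenKindCovers X Ψ))
    (h𝒰 : ∀ n, univ ∈ 𝒰 n ∨ 𝒰 n ∈ OpenKindCovers X Φ) :
    ∃ U : ℕ → Set X, (∀ n, U n ∈ 𝒰 n) ∧ SeqCovers Ψ U := by
  classical
  by_cases h₀ : ∃ n₀, univ ∉ 𝒰 n₀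
  swap
  · push Not at h₀
    exact ⟨fun _ => univ, h₀, seqCovers_const_univ Ψ⟩
  obtain ⟨n₀, hn₀⟩ := h₀
  set 𝒰' : ℕ → Set (Set X) := fun n => if univ ∈ 𝒰 n then 𝒰 n₀ else 𝒰 n
  have h𝒰' : ∀ n, 𝒰' n ∈ OpenKindCovers X Φ ∧ univ ∉ 𝒰' n := fun n => by
    by_cases hn : univ ∈ 𝒰 n
    · simpa [𝒰', hn] using ⟨(h𝒰 n₀).resolve_left hn₀, hn₀⟩
    · simpa [𝒰', hn] using (h𝒰 n).resolve_left hn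
  obtain ⟨U, hU, hcov⟩ :=
    exists_seqCovers_of_S1 hΦ hS1 (fun n => (h𝒰' n).1) fun n => (h𝒰' n).2
  refine ⟨fun n => if univ ∈ 𝒰 n then univ else U n, fun n => ?_, hcov.mono fun n => ?_⟩
  · by_cases hn : univ ∈ 𝒰 n
    · simp [hn]
    · simpa [𝒰', hn] using hU n
  · split_ifs
    exacts [subset_univ _, subset_rfl]

end Selection

section Functions

variable {h : X → ℝ} {F : Set (X → ℝ)}

def sublevelCover (h : X → ℝ) (F : Set (X → ℝ)) (ε : ℝ) : Set (Set X) :=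
  (fun f => {x | f x - h x < ε}) '' (F \ {h})

theorem PropGamma.mem_closure_diff (hF : PropGamma h F) : h ∈ closure (F \ {h}) := by
  refine mem_closure_pi_iff_dist.2 fun S hS δ hδ => ?_
  obtain ⟨f, hf, hbad⟩ := ((hF.1.sdiff (finite_singleton h)).sdiff
    (hS.biUnion fun x _ => hF.2 δ hδ x)).nonempty
  exact ⟨f, hf, fun x hx => by
    simpa [Real.dist_eq] using fun hδf => hbad (mem_biUnion hx ⟨hf.1, hδf⟩)⟩

theorem mem_closure_diff_of_mem_PhiH {Φ : CoverKind} (hΦ : Φ = .omega ∨ Φ = .gamma)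
    {H : Set (X → ℝ)} (hF : F ∈ PhiH Φ h H) : h ∈ closure (F \ {h}) := by
  rcases hΦ with rfl | rfl
  · simpa [sdiff_singleton_eq_self hF.2.1.1] using hF.2.1.2
  · exact PropGamma.mem_closure_diff hF.2.1

theorem univ_mem_or_mem_openKindCovers [TopologicalSpace X] {Φ : CoverKind}
    (hΦ : Φ = .omega ∨ Φ = .gamma) (hF : F ∈ PhiH Φ h (USCb X)) {ε : ℝ} (hε : 0 < ε) :
    univ ∈ sublevelCover h F ε ∨ sublevelCover h F ε ∈ OpenKindCovers X Φ := by
  refine or_iff_not_imp_left.2 fun huniv => ?_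
  have hopen : ∀ V ∈ sublevelCover h F ε, IsOpen V := by
    rintro _ ⟨f, hf, rfl⟩
    exact (hF.2.2 f hf.1).2.1 ε
  have hω : ∀ S : Set X, S.Finite → ∃ V ∈ sublevelCover h F ε, S ⊆ V := fun S hS =>
    let ⟨f, hf, hfS⟩ := mem_closure_pi_iff_dist.1 (mem_closure_diff_of_mem_PhiH hΦ hF) S hS ε hε
    ⟨_, mem_image_of_mem _ hf, fun x hx => (le_abs_self _).trans_lt (hfS x hx)⟩
  rcases hΦ with rfl | rfl
  · exact ⟨hopen, kindSets_omega_of huniv hω⟩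
  · refine ⟨hopen, kindSets_gamma_of (infinite_of_forall_finite_subset huniv hω) fun x => ?_⟩
    refine ((hF.2.1.2 ε hε x).image fun f => {x | f x - h x < ε}).subset ?_
    rintro _ ⟨⟨f, hf, rfl⟩, hx⟩
    exact ⟨f, ⟨hf.1, (not_lt.1 hx).trans (le_abs_self _)⟩, rfl⟩

theorem propGamma_range_of_tendsto {sel : ℕ → X → ℝ} (hne : ∀ n, sel n ≠ h)
    (hlim : Tendsto sel atTop (𝓝 h)) : PropGamma h (range sel) := by
  refine ⟨fun hfin => ?_, fun δ hδ x => ?_⟩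
  · obtain ⟨n, hn⟩ := hfin.isClosed.closure_subset
      (mem_closure_of_tendsto hlim (Eventually.of_forall mem_range_self))
    exact hne n hn
  · have hx := Metric.tendsto_nhds.1 (tendsto_pi_nhds.1 hlim x) δ hδ
    rw [← Nat.cofinite_eq_atTop, eventually_cofinite] at hx
    refine (hx.image sel).subset ?_
    rintro _ ⟨⟨n, rfl⟩, hn⟩
    exact ⟨n, by simpa [Real.dist_eq] using hn, rfl⟩

theorem kindProp_range_of_seqCovers {k : CoverKind} {ε : ℕ → ℝ}
    (hε : Tendsto ε atTop (𝓝 0)) {sel : ℕ → X → ℝ} (hle : ∀ n, h ≤ sel n)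
    (hne : ∀ n, sel n ≠ h) (hU : SeqCovers k fun n => {x | sel n x - h x < ε n}) :
    kindProp k h (range sel) := by
  have hdist : ∀ n x, dist (sel n x) (h x) = sel n x - h x := fun n x => by
    rw [Real.dist_eq, abs_of_nonneg (sub_nonneg.2 (hle n x))]
  have hsmall : ∀ δ > 0, ∀ᶠ n in atTop, ε n < δ := fun δ hδ => hε.eventually (gt_mem_nhds hδ)
  cases k
  · refine fun x => Metric.mem_closure_iff.2 fun δ hδ => ?_
    obtain ⟨n, hxn, hεn⟩ := ((hU x).and_eventually (hsmall δ hδ)).exists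
    exact ⟨sel n x, mem_image_of_mem _ (mem_range_self n),
      by rw [dist_comm, hdist]; exact hxn.trans hεn⟩
  · refine ⟨fun ⟨n, hn⟩ => hne n hn, mem_closure_pi_iff_dist.2 fun S hS δ hδ => ?_⟩
    obtain ⟨n, hSn, hεn⟩ := ((hU S hS).and_eventually (hsmall δ hδ)).exists
    exact ⟨sel n, mem_range_self n, fun x hx => by rw [hdist]; exact (hSn hx).trans hεn⟩
  · refine propGamma_range_of_tendsto hne (tendsto_pi_nhds.2 fun x => ?_)
    refine tendsto_of_tendsto_of_tendsto_of_le_of_le' tendsto_const_nhds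
      (by simpa using hε.const_add (h x)) (Eventually.of_forall fun n => hle n x) ?_
    filter_upwards [hU x] with n hn
    exact (sub_lt_iff_lt_add'.1 hn).le

end Functions

section Indicators

noncomputable def outsideIndicator (U : Set X) : X → ℝ := Uᶜ.indicator 1

theorem outsideIndicator_injective : Function.Injective (outsideIndicator (X := X)) :=
  fun _ _ h => compl_inj_iff.1 (indicator_one_inj ℝ h)

theorem abs_outsideIndicator_lt_iff {U : Set X} {x : X} {δ : ℝ} (h0 : 0 < δ) (h1 : δ ≤ 1) :
    |outsideIndicator U x| < δ ↔ x ∈ U := by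
  by_cases hx : x ∈ U <;> simp [outsideIndicator, hx, h0, h1]

theorem outsideIndicator_mem_USCb [TopologicalSpace X] {U : Set X} (hU : IsOpen U) :
    outsideIndicator U ∈ USCb X := by
  refine ⟨upperSemicontinuous_iff_isOpen_preimage.1
    (hU.isClosed_compl.upperSemicontinuous_indicator zero_le_one), 1, fun x => ?_⟩
  by_cases hx : x ∈ U <;> simp [outsideIndicator, hx]

theorem zero_mem_USCb [TopologicalSpace X] : (0 : X → ℝ) ∈ USCb X :=
  ⟨upperSemicontinuous_iff_isOpen_preimage.1 continuous_const.upperSemicontinuous, 0, by simp⟩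

variable {𝒰 : Set (Set X)}

theorem propO_zero_outsideIndicator_iff :
    PropO 0 (outsideIndicator '' 𝒰) ↔ IsCover 𝒰 := by
  refine ⟨fun h x => ?_, fun h x => ?_⟩
  · obtain ⟨_, ⟨_, ⟨U, hU, rfl⟩, rfl⟩, hd⟩ := Metric.mem_closure_iff.1 (h x) 1 one_pos
    exact ⟨U, hU, (abs_outsideIndicator_lt_iff one_pos le_rfl).1 (by simpa [Real.dist_eq] using hd)⟩
  · obtain ⟨U, hU, hx⟩ := h x
    exact subset_closure ⟨_, mem_image_of_mem _ hU, by simp [outsideIndicator, hx]⟩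

theorem propOmega_zero_outsideIndicator_iff :
    PropOmega 0 (outsideIndicator '' 𝒰) ↔ kindSets .omega 𝒰 := by
  have hzero : (0 : X → ℝ) = outsideIndicator univ := by ext; simp [outsideIndicator]
  have hcl : (0 : X → ℝ) ∈ closure (outsideIndicator '' 𝒰) ↔
      ∀ S : Set X, S.Finite → ∃ U ∈ 𝒰, S ⊆ U := by
    rw [mem_closure_pi_iff_dist]
    refine ⟨fun H S hS => ?_, fun H S hS δ hδ => ?_⟩
    · obtain ⟨_, ⟨U, hU, rfl⟩, hSU⟩ := H S hS 1 one_pos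
      exact ⟨U, hU, fun x hx =>
        (abs_outsideIndicator_lt_iff one_pos le_rfl).1 (by simpa using hSU x hx)⟩
    · obtain ⟨U, hU, hSU⟩ := H S hS
      exact ⟨_, mem_image_of_mem _ hU, fun x hx => by simpa [outsideIndicator, hSU hx] using hδ⟩
  rw [PropOmega, hcl, hzero, outsideIndicator_injective.mem_set_image]
  exact ⟨fun h => kindSets_omega_of h.1 h.2, fun h => ⟨h.2.1, h.2.2⟩⟩

theorem propGamma_zero_outsideIndicator_iff :
    PropGamma 0 (outsideIndicator '' 𝒰) ↔ kindSets .gamma 𝒰 := by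
  have hsub : ∀ δ > 0, ∀ x, {f ∈ outsideIndicator '' 𝒰 | δ ≤ |f x - (0 : X → ℝ) x|} ⊆
      outsideIndicator '' {U ∈ 𝒰 | x ∉ U} := by
    rintro δ hδ x _ ⟨⟨U, hU, rfl⟩, hδU⟩
    refine ⟨U, ⟨hU, fun hx => ?_⟩, rfl⟩
    exact hδ.not_ge (by simpa [outsideIndicator, hx] using hδU)
  have hsup : ∀ x, outsideIndicator '' {U ∈ 𝒰 | x ∉ U} ⊆
      {f ∈ outsideIndicator '' 𝒰 | 1 ≤ |f x - (0 : X → ℝ) x|} := by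
    rintro x _ ⟨U, ⟨hU, hx⟩, rfl⟩
    exact ⟨mem_image_of_mem _ hU, by simp [outsideIndicator, hx]⟩
  rw [PropGamma, infinite_image_iff outsideIndicator_injective.injOn]
  refine ⟨fun h => kindSets_gamma_of h.1 fun x => ?_, fun h => ⟨h.2.1, fun δ hδ x => ?_⟩⟩
  · exact ((h.2 1 one_pos x).subset (hsup x)).of_finite_image outsideIndicator_injective.injOn
  · exact ((h.2.2 x).image _).subset (hsub δ hδ x)

theorem kindProp_zero_outsideIndicator_iff {k : CoverKind} :
    kindProp k 0 (outsideIndicator '' 𝒰) ↔ kindSets k 𝒰 := by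
  cases k
  exacts [propO_zero_outsideIndicator_iff, propOmega_zero_outsideIndicator_iff,
    propGamma_zero_outsideIndicator_iff]

theorem outsideIndicator_image_mem_PhiH [TopologicalSpace X] {k : CoverKind}
    (h𝒰 : 𝒰 ∈ OpenKindCovers X k) : outsideIndicator '' 𝒰 ∈ PhiH k 0 (USCb X) := by
  refine ⟨?_, kindProp_zero_outsideIndicator_iff.2 h𝒰.2, ?_⟩
  all_goals rintro _ ⟨U, hU, rfl⟩
  · exact outsideIndicator_mem_USCb (h𝒰.1 U hU)
  · exact ⟨fun x => by by_cases hx : x ∈ U <;> simp [outsideIndicator, hx],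
      by simpa using outsideIndicator_mem_USCb (h𝒰.1 U hU)⟩

end Indicators

theorem statement0_general {X : Type*} [TopologicalSpace X]
    (Φ Ψ : CoverKind) (hΦ : Φ = CoverKind.omega ∨ Φ = CoverKind.gamma) :
    S1 (OpenKindCovers X Φ) (OpenKindCovers X Ψ) ↔
      ∀ h ∈ USCb X, S1 (PhiH Φ h (USCb X)) (PhiH Ψ h (USCb X)) := by
  constructor
  · intro hS1 h _ u hu
    obtain ⟨U, hU, hcov⟩ := exists_seqCovers_of_S1_of_univ_mem_or hΦ hS1 fun n =>
      univ_mem_or_mem_openKindCovers hΦ (hu n) Nat.one_div_pos_of_nat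
    choose sel hsel hselU using hU
    rw [← funext hselU] at hcov
    refine ⟨sel, fun n => (hsel n).1, range_subset_iff.2 fun n => (hu n).1 (hsel n).1,
      kindProp_range_of_seqCovers tendsto_one_div_add_atTop_nhds_zero_nat
        (fun n => ((hu n).2.2 _ (hsel n).1).1) (fun n => (hsel n).2) hcov,
      forall_mem_range.2 fun n => (hu n).2.2 _ (hsel n).1⟩
  · intro hfun u hu
    obtain ⟨f, hf, hprop⟩ := hfun 0 zero_mem_USCb (fun n => outsideIndicator '' u n) fun n =>
      outsideIndicator_image_mem_PhiH (hu n)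
    choose U hU hUf using hf
    refine ⟨U, hU, forall_mem_range.2 fun n => (hu n).1 _ (hU n), ?_⟩
    rw [← kindProp_zero_outsideIndicator_iff, ← range_comp, Function.comp_def]
    simpa only [hUf] using hprop.2.1

/-- For Φ ∈ {Ω, Γ}, Ψ ∈ {𝒪, Ω, Γ} with ⟨Φ,Ψ⟩ ≠ ⟨Ω,𝒪⟩ (or, alternatively,
with X possessing property (ε)), and X an infinite Hausdorff space:
X is an S₁(Φ,Ψ)-space iff for every h ∈ USC*_p(X) the family USC*_p(X) satisfies
the selection principle S₁(Φ_h,Ψ_h). -/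
theorem statement0 {X : Type*} [TopologicalSpace X] [T2Space X] [Infinite X]
    (Φ Ψ : CoverKind) (hΦ : Φ = CoverKind.omega ∨ Φ = CoverKind.gamma)
    (hpair : ¬(Φ = CoverKind.omega ∧ Ψ = CoverKind.o) ∨ PropEps X) :
    S1 (OpenKindCovers X Φ) (OpenKindCovers X Ψ) ↔
      ∀ h ∈ USCb X, S1 (PhiH Φ h (USCb X)) (PhiH Ψ h (USCb X)) :=
  statement0_general Φ Ψ hΦ

end Selectors
end

section
/- If X is a Tychonoff topological space possessing the OB-property, then USC*_p(X) is sequentially separable, i.e., USC*_p(X) has a countable subset S such that every member of USC*_p(X) is a pointwise limit of a sequence from S. -/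
open Set Filter Topology

namespace Selectors

variable {X : Type*}

/-!
The OB-property yields a continuous map `e` of `X` into the Hilbert cube along which every locally
closed set, in particular `{f < a}` and `{a ≤ f}` for upper semicontinuous `f`, is the preimage of
an `F_σ` set. Separating these two `F_σ` sets stage by stage with Urysohn functions shows that the
indicator of `{a ≤ f}` is a pointwise limit of functions `Φ ∘ e` with `Φ` continuous on the cube;
hence so are the dyadic step functions approximating a bounded `f`, and, by a diagonal argument,
`f` itself. The cube being compact metrizable, `C(cube, ℝ)` has a countable uniformly dense subset
`(u j)`, and then `{u j ∘ e}` is a countable sequentially dense subset of `USC*_p(X)`.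
-/

open TopologicalSpace

lemma abs_mul_sum_range_ite_sub_le {δ t : ℝ} (hδ : 0 < δ) {N : ℕ} (ht0 : 0 ≤ t) (htN : t ≤ N * δ) :
    |δ * ∑ k ∈ Finset.range N, (if ((k : ℝ) + 1) * δ ≤ t then 1 else 0) - t| ≤ δ := by
  have hfloor : ⌊t / δ⌋₊ ≤ N := Nat.floor_le_of_le ((div_le_iff₀ hδ).2 htN)
  have hfilter : (Finset.range N).filter (fun k : ℕ => ((k : ℝ) + 1) * δ ≤ t) =
      Finset.range ⌊t / δ⌋₊ := by
    ext k
    simp only [Finset.mem_filter, Finset.mem_range, ← le_div_iff₀ hδ]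
    rw [← Nat.cast_succ, ← Nat.le_floor_iff (div_nonneg ht0 hδ.le)]
    omega
  rw [Finset.sum_boole, hfilter, Finset.card_range, abs_le]
  have h1 := Nat.floor_le (div_nonneg ht0 hδ.le)
  have h2 := Nat.lt_floor_add_one (t / δ)
  constructor
  · nlinarith [(div_lt_iff₀ hδ).1 h2]
  · nlinarith [mul_le_mul_of_nonneg_left h1 hδ.le, mul_div_cancel₀ t hδ.ne']

lemma disjoint_iUnion_sdiff_of_monotone {α : Type*} {A B : ℕ → Set α} (hA : Monotone A)
    (hB : Monotone B) : Disjoint (⋃ m, A m \ B m) (⋃ m, B m \ A m) := by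
  simp only [Set.disjoint_iUnion_left, Set.disjoint_iUnion_right]
  intro n m
  rw [Set.disjoint_left]
  rintro z ⟨hzAm, hzBm⟩ ⟨hzBn, hzAn⟩
  rcases le_total m n with h | h
  · exact hzAn (hA h hzAm)
  · exact hzBm (hB h hzBn)

lemma isClosed_accumulate {K : Type*} [TopologicalSpace K] {C : ℕ → Set K}
    (hC : ∀ n, IsClosed (C n)) (n : ℕ) : IsClosed (Set.accumulate C n) :=
  (Set.finite_le_nat n).isClosed_biUnion fun m _ => hC m

section Thickening

variable {K : Type*} [PseudoMetricSpace K]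

lemma isClosed_biUnion_sdiff_thickening {A B : ℕ → Set K} (hA : ∀ n, IsClosed (A n))
    (s : ℕ) (r : ℝ) : IsClosed (⋃ m ≤ s, A m \ Metric.thickening r (B m)) :=
  (Set.finite_le_nat s).isClosed_biUnion fun m _ => (hA m).sdiff Metric.isOpen_thickening

lemma biUnion_sdiff_thickening_subset {A B : ℕ → Set K} (s : ℕ) {r : ℝ} (hr : 0 < r) :
    (⋃ m ≤ s, A m \ Metric.thickening r (B m)) ⊆ ⋃ m, A m \ B m :=
  Set.iUnion₂_subset fun m _ => (Set.sdiff_subset_sdiff_right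
    (Metric.self_subset_thickening hr _)).trans (Set.subset_iUnion (fun m => A m \ B m) m)

lemma eventually_mem_biUnion_sdiff_thickening {A B : ℕ → Set K} (hB : ∀ n, IsClosed (B n))
    {y : K} (hyA : y ∈ ⋃ n, A n) (hyB : y ∉ ⋃ n, B n) :
    ∀ᶠ s : ℕ in atTop, y ∈ ⋃ m ≤ s, A m \ Metric.thickening (1 / (s + 1)) (B m) := by
  obtain ⟨m, hm⟩ := Set.mem_iUnion.1 hyA
  have hyBm : y ∉ closure (B m) := by
    rw [(hB m).closure_eq]
    exact fun h => hyB (Set.mem_iUnion_of_mem m h)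
  simp only [Metric.closure_eq_iInter_thickening, Set.mem_iInter, not_forall] at hyBm
  obtain ⟨δ, hδ, hyδ⟩ := hyBm
  filter_upwards [eventually_ge_atTop m,
    (tendsto_one_div_add_atTop_nhds_zero_nat (𝕜 := ℝ)).eventually (gt_mem_nhds hδ)] with s hs hsδ
  exact Set.mem_biUnion hs ⟨hm, fun h => hyδ (Metric.thickening_mono hsδ.le _ h)⟩

end Thickening

lemma exists_isInducing_hilbertCube (Y : Type*) [TopologicalSpace Y] [PseudoMetrizableSpace Y]
    [SeparableSpace Y] : ∃ e : Y → (ℕ → unitInterval), IsInducing e := by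
  let := pseudoMetrizableSpacePseudoMetric Y
  rcases isEmpty_or_nonempty Y with hY | hY
  · exact ⟨isEmptyElim, (IsEmbedding.of_subsingleton _).isInducing⟩
  obtain ⟨u, hu⟩ := exists_dense_seq Y
  set e : Y → (ℕ → unitInterval) := fun y i => Set.projIcc 0 1 zero_le_one (dist y (u i))
  have he : ∀ y i, (e y i : ℝ) = min 1 (dist y (u i)) := fun y i =>
    max_eq_right (le_min zero_le_one dist_nonneg)
  have hcont : Continuous e :=
    continuous_pi fun i => continuous_projIcc.comp (continuous_id.dist continuous_const)
  refine ⟨e, isInducing_iff_nhds.2 fun y => le_antisymm (hcont.tendsto y).le_comap ?_⟩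
  refine Metric.nhds_basis_ball.ge_iff.2 fun ε hε => ?_
  set r := min (ε / 2) 1
  have hr : 0 < r := lt_min (half_pos hε) one_pos
  obtain ⟨i, hi⟩ := Metric.denseRange_iff.1 hu y (r / 2) (half_pos hr)
  have hopen : IsOpen {v : ℕ → unitInterval | (v i : ℝ) < r} :=
    isOpen_lt (continuous_subtype_val.comp (continuous_apply i)) continuous_const
  refine Filter.mem_comap.2 ⟨_, hopen.mem_nhds ?_, fun z hz => ?_⟩
  · simp only [Set.mem_ofPred_eq, he]
    exact (min_le_right _ _).trans_lt (by linarith)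
  · have hzi : dist z (u i) < r := by
      have : min 1 (dist z (u i)) < r := he z i ▸ hz
      exact (min_lt_iff.1 this).resolve_left (not_lt.2 (min_le_right _ _))
    rw [Metric.mem_ball]
    calc dist z y ≤ dist z (u i) + dist y (u i) := dist_triangle_right _ _ _
      _ < ε := by linarith [min_le_left (ε / 2) 1]

section BaireOneVia

variable {K : Type*} [TopologicalSpace K]

def IsBaireOneVia (e : X → K) (f : X → ℝ) : Prop :=
  ∃ Φ : ℕ → C(K, ℝ), ∀ x, Tendsto (fun m => Φ m (e x)) atTop (𝓝 (f x))

variable {e : X → K}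

lemma isBaireOneVia_const_add_sum {ι : Type*} (s : Finset ι) (c : ℝ) (w : ι → ℝ)
    {g : ι → X → ℝ} (hg : ∀ i ∈ s, IsBaireOneVia e (g i)) :
    IsBaireOneVia e fun x => c + ∑ i ∈ s, w i * g i x := by
  choose! Φ hΦ using hg
  refine ⟨fun m => ContinuousMap.const K c + ∑ i ∈ s, w i • Φ i m, fun x => ?_⟩
  simp only [ContinuousMap.add_apply, ContinuousMap.const_apply, ContinuousMap.coe_sum,
    Finset.sum_apply, ContinuousMap.coe_smul, Pi.smul_apply, smul_eq_mul]
  exact tendsto_const_nhds.add (tendsto_finsetSum _ fun i hi => (hΦ i hi x).const_mul _)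

/-- Clip the increments of the approximants to their summable bounds; Tannery's theorem then
makes the diagonal of the telescoping series converge. -/
lemma IsBaireOneVia.of_summable_approx {h : ℕ → X → ℝ} {f : X → ℝ} {ε : ℕ → ℝ}
    (hh : ∀ n, IsBaireOneVia e (h n)) (hε : Summable ε) (happrox : ∀ n x, |h n x - f x| ≤ ε n) :
    IsBaireOneVia e f := by
  choose Φ hΦ using hh
  set c : ℕ → ℝ := fun n => |ε n| + |ε (n + 1)|
  have hc : Summable c := hε.abs.add ((summable_nat_add_iff 1).2 hε.abs)
  have hc0 : ∀ n, 0 ≤ c n := fun n => by positivity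
  let clip (n : ℕ) : C(ℝ, ℝ) := ⟨fun y => max (-c n) (min (c n) y), by fun_prop⟩
  have hclip_le : ∀ n y, ‖clip n y‖ ≤ c n := fun n y =>
    abs_le.2 ⟨le_max_left _ _, max_le (by linarith [hc0 n]) (min_le_left _ _)⟩
  have hclip_eq : ∀ n y, |y| ≤ c n → clip n y = y := fun n y hy => by
    simp [clip, min_eq_right (abs_le.1 hy).2, max_eq_right (abs_le.1 hy).1]
  have hincr : ∀ n x, |h (n + 1) x - h n x| ≤ c n := fun n x => by
    have h1 := happrox (n + 1) x
    have h2 := happrox n x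
    calc |h (n + 1) x - h n x| = |(h (n + 1) x - f x) - (h n x - f x)| := by
          rw [sub_sub_sub_cancel_right]
      _ ≤ |h (n + 1) x - f x| + |h n x - f x| := abs_sub _ _
      _ ≤ c n := by simp only [c]; linarith [le_abs_self (ε n), le_abs_self (ε (n + 1))]
  refine ⟨fun m => Φ 0 m + ∑ n ∈ Finset.range m, (clip n).comp (Φ (n + 1) m - Φ n m),
    fun x => ?_⟩
  have hlim : Tendsto (fun m => h m x) atTop (𝓝 (f x)) :=
    tendsto_iff_norm_sub_tendsto_zero.2 <|
      squeeze_zero (fun _ => norm_nonneg _) (fun m => happrox m x) hε.tendsto_atTop_zero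
  have hsum : HasSum (fun n => h (n + 1) x - h n x) (f x - h 0 x) := by
    rw [hasSum_iff_tendsto_nat_of_summable_norm (hc.of_nonneg_of_le (fun _ => norm_nonneg _)
      fun n => hincr n x)]
    exact (hlim.sub_const _).congr fun m => (Finset.sum_range_sub (h · x) m).symm
  set T : ℕ → ℕ → ℝ := fun m n => if n < m then clip n (Φ (n + 1) m (e x) - Φ n m (e x)) else 0
  have hT : ∀ m, ∑' n, T m n = ∑ n ∈ Finset.range m, clip n (Φ (n + 1) m (e x) - Φ n m (e x)) := by
    intro m
    rw [tsum_eq_sum (s := Finset.range m) fun n hn => if_neg (by simpa using hn)]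
    exact Finset.sum_congr rfl fun n hn => if_pos (Finset.mem_range.1 hn)
  have hTlim : ∀ n, Tendsto (fun m => T m n) atTop (𝓝 (h (n + 1) x - h n x)) := by
    intro n
    have : Tendsto (fun m => clip n (Φ (n + 1) m (e x) - Φ n m (e x))) atTop
        (𝓝 (h (n + 1) x - h n x)) := by
      rw [← hclip_eq n _ (hincr n x)]
      exact ((clip n).continuous.tendsto _).comp ((hΦ (n + 1) x).sub (hΦ n x))
    refine this.congr' ?_
    filter_upwards [eventually_gt_atTop n] with m hm
    simp [T, hm]
  have := tendsto_tsum_of_dominated_convergence hc hTlim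
    (Eventually.of_forall fun m n => by
      simp only [T]; split_ifs
      · exact hclip_le n _
      · simpa using hc0 n)
  rw [hsum.tsum_eq] at this
  convert (hΦ 0 x).add this using 1
  · ext m
    simp [hT]
  · rw [add_sub_cancel]

lemma IsBaireOneVia.of_indicator {f : X → ℝ} (hbdd : ∃ M, ∀ x, |f x| ≤ M)
    (hind : ∀ a, IsBaireOneVia e ({x | a ≤ f x}.indicator 1)) : IsBaireOneVia e f := by
  obtain ⟨M, hM⟩ := hbdd
  obtain ⟨N, hN⟩ := exists_nat_ge M
  set δ : ℕ → ℝ := fun n => (1 / 2) ^ n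
  refine IsBaireOneVia.of_summable_approx (h := fun n x => -N + ∑ k ∈ Finset.range (2 * N * 2 ^ n),
      δ n * {x | -N + (k + 1) * δ n ≤ f x}.indicator 1 x)
    (fun n => isBaireOneVia_const_add_sum _ _ _ fun k _ => hind _) summable_geometric_two
    fun n x => ?_
  have hδ : 0 < δ n := by positivity
  have hfx := abs_le.1 (hM x)
  have key := abs_mul_sum_range_ite_sub_le hδ (t := N + f x) (N := 2 * N * 2 ^ n) (by linarith)
    (by simp only [δ]; push_cast; rw [mul_assoc, ← mul_pow]; norm_num; linarith)
  convert key using 2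
  simp only [Finset.mul_sum, Set.indicator_apply, Set.mem_ofPred_eq, Pi.one_apply,
    neg_add_le_iff_le_add]
  ring

/-- With `P`, `Q` increasing closed sequences exhausting `U`, `V`, the `s`-th approximant is an
Urysohn function separating `⋃ m ≤ s, P m \ thickening (1 / (s + 1)) (Q m)` from its mirror image;
a point of `U \ V` eventually enters the first set and stays there. -/
lemma isBaireOneVia_indicator [PseudoMetrizableSpace K] {S : Set X} {U V : Set K}
    (hU : IsFsigmaIn inferInstance U) (hV : IsFsigmaIn inferInstance V)
    (hSU : e ⁻¹' U = S) (hSV : e ⁻¹' V = Sᶜ) : IsBaireOneVia e (S.indicator 1) := by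
  let := pseudoMetrizableSpacePseudoMetric K
  obtain ⟨C, hC, rfl⟩ := hU
  obtain ⟨D, hD, rfl⟩ := hV
  set P := Set.accumulate C
  set Q := Set.accumulate D
  have hP : ∀ n, IsClosed (P n) := isClosed_accumulate hC
  have hQ : ∀ n, IsClosed (Q n) := isClosed_accumulate hD
  set P' : ℕ → Set K := fun s => ⋃ m ≤ s, P m \ Metric.thickening (1 / (s + 1)) (Q m)
  set Q' : ℕ → Set K := fun s => ⋃ m ≤ s, Q m \ Metric.thickening (1 / (s + 1)) (P m)
  have hsep : ∀ s, ∃ Φ : C(K, ℝ), EqOn Φ 0 (Q' s) ∧ EqOn Φ 1 (P' s) ∧ ∀ y, Φ y ∈ Icc 0 1 :=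
    fun s => exists_continuous_zero_one_of_isClosed
      (isClosed_biUnion_sdiff_thickening hQ s _) (isClosed_biUnion_sdiff_thickening hP s _)
      ((disjoint_iUnion_sdiff_of_monotone Set.monotone_accumulate Set.monotone_accumulate).mono
        (biUnion_sdiff_thickening_subset s Nat.one_div_pos_of_nat)
        (biUnion_sdiff_thickening_subset s Nat.one_div_pos_of_nat)).symm
  choose Φ hΦ0 hΦ1 _ using hsep
  refine ⟨Φ, fun x => tendsto_const_nhds.congr' ?_⟩
  have hU : e x ∈ ⋃ n, P n ↔ x ∈ S := by rw [Set.iUnion_accumulate, ← hSU]; rfl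
  have hV : e x ∈ ⋃ n, Q n ↔ x ∉ S := by rw [Set.iUnion_accumulate, ← Set.mem_compl_iff, ← hSV]; rfl
  by_cases hx : x ∈ S
  · filter_upwards [eventually_mem_biUnion_sdiff_thickening hQ (hU.2 hx) (mt hV.1 (not_not.2 hx))]
      with s hs
    simp [hx, hΦ1 s hs]
  · filter_upwards [eventually_mem_biUnion_sdiff_thickening hP (hV.2 hx) (mt hU.1 hx)] with s hs
    simp [hx, hΦ0 s hs]

lemma IsBaireOneVia.exists_tendsto_comp_denseRange [CompactSpace K] {u : ℕ → C(K, ℝ)}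
    (hu : DenseRange u) {f : X → ℝ} (hf : IsBaireOneVia e f) :
    ∃ j : ℕ → ℕ, Tendsto (fun m => ⇑(u (j m)) ∘ e) atTop (𝓝 f) := by
  obtain ⟨Φ, hΦ⟩ := hf
  choose j hj using fun m : ℕ =>
    Metric.denseRange_iff.1 hu (Φ m) (1 / ((m : ℝ) + 1)) Nat.one_div_pos_of_nat
  refine ⟨j, tendsto_pi_nhds.2 fun x => (hΦ x).congr_dist ?_⟩
  refine squeeze_zero (fun _ => dist_nonneg) (fun m => ?_) tendsto_one_div_add_atTop_nhds_zero_nat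
  exact (ContinuousMap.dist_apply_le_dist _).trans (hj m).le

end BaireOneVia

lemma OBProperty.exists_continuous_preimage_fsigma [TopologicalSpace X] (hOB : OBProperty X) :
    ∃ e : X → (ℕ → unitInterval), Continuous e ∧
      ∀ S, IsLocallyClosedIn inferInstance S → ∃ U, IsFsigmaIn inferInstance U ∧ e ⁻¹' U = S := by
  obtain ⟨t', hle, hmet, hsep, hF⟩ := hOB
  obtain ⟨e, he⟩ := @exists_isInducing_hilbertCube X t' hmet.toPseudoMetrizableSpace hsep
  refine ⟨e, continuous_def.2 fun s hs => hle _ (he.continuous.isOpen_preimage s hs),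
    fun S hS => ?_⟩
  obtain ⟨C, hC, rfl⟩ := hF S hS
  choose D hD hDC using fun n => (he.isClosed_iff (s := C n)).1 (hC n)
  exact ⟨⋃ n, D n, ⟨D, hD, rfl⟩, by simp only [Set.preimage_iUnion, hDC]⟩

lemma isBaireOneVia_of_isUSCb [TopologicalSpace X] {K : Type*} [TopologicalSpace K]
    [PseudoMetrizableSpace K] {e : X → K}
    (he : ∀ S, IsLocallyClosedIn inferInstance S → ∃ U, IsFsigmaIn inferInstance U ∧ e ⁻¹' U = S)
    {f : X → ℝ} (hf : IsUSCb f) : IsBaireOneVia e f := by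
  refine IsBaireOneVia.of_indicator hf.2 fun a => ?_
  have hlt : IsOpen {x | f x < a} := hf.1 a
  obtain ⟨U, hU, hSU⟩ := he {x | a ≤ f x}
    ⟨univ, _, isOpen_univ, by simpa only [compl_ofPred, not_lt] using hlt.isClosed_compl, by simp⟩
  obtain ⟨V, hV, hSV⟩ := he {x | f x < a} ⟨_, univ, hlt, isClosed_univ, by simp⟩
  exact isBaireOneVia_indicator hU hV hSU (by simpa only [compl_ofPred, not_le] using hSV)

theorem statement3_general {X : Type*} [TopologicalSpace X]
    (hOB : OBProperty X) : SeqSeparableSet (USCb X) := by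
  obtain ⟨e, he, hpull⟩ := hOB.exists_continuous_preimage_fsigma
  obtain ⟨u, hu⟩ := exists_dense_seq C(ℕ → unitInterval, ℝ)
  refine ⟨Set.range fun j => ⇑(u j) ∘ e, Set.countable_range _, ?_, fun f hf => ?_⟩
  · rintro _ ⟨j, rfl⟩
    exact ⟨fun a => isOpen_lt ((u j).continuous.comp he) continuous_const,
      ‖u j‖, fun x => (u j).norm_coe_le_norm (e x)⟩
  · obtain ⟨j, hj⟩ := (isBaireOneVia_of_isUSCb hpull hf).exists_tendsto_comp_denseRange hu
    exact ⟨_, fun m => ⟨j m, rfl⟩, hj⟩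

/-- If a Tychonoff space X has the OB-property then USC*_p(X) is
sequentially separable. -/
theorem statement3 {X : Type*} [TopologicalSpace X] [T35Space X] [Infinite X]
    (hOB : OBProperty X) : SeqSeparableSet (USCb X) :=
  statement3_general hOB

end Selectors
end

section
/- The Sorgenfrey plane 𝕊² is a perfect topological space that does not possess the OB-property. -/
open Set Filter Topology

namespace Selectors

variable {X : Type*}

/-!
An open set of `𝕊 × Y`, `Y` metric, is its Euclidean interior (open, hence `F_σ`, in the metric
space `ℝ × Y`) together with the closures of the sets `E r` of points off the Euclidean interior
whose half-open box of radius `r` lies in the set. These closures stay inside the set: of two points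
of `E r` near a limit point, one strictly to the right of the other would lie in the Euclidean
interior. In `𝕊²`, the points of an open `U` that are interior neither for `𝕊 × ℝ` nor for
`ℝ × 𝕊` and carry a box of radius `r` in `U` are pairwise incomparable for the product order
within distance `r`, and antichains of `ℝ × ℝ` are closed in `𝕊²`.

Every subset of the antidiagonal is an antichain, hence closed in `𝕊²`. A separable metrizable
topology is second countable, so it has at most `𝔠` many `F_σ`-sets, fewer than the `2 ^ 𝔠`
subsets of the antidiagonal.
-/

theorem _root_.IsClosed.isFsigmaIn {X : Type*} {t : TopologicalSpace X} {C : Set X}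
    (hC : IsClosed[t] C) : IsFsigmaIn t C :=
  ⟨fun _ => C, fun _ => hC, (iUnion_const C).symm⟩

theorem _root_.IsOpen.isFsigmaIn {X : Type*} [t : TopologicalSpace X] [PerfectlyNormalSpace X]
    {U : Set X} (hU : IsOpen U) : IsFsigmaIn t U := by
  obtain ⟨G, hG, hUG⟩ := isGδ_iff_eq_iInter_nat.1 hU.isClosed_compl.isGδ
  exact ⟨fun n => (G n)ᶜ, fun n => (hG n).isClosed_compl,
    by rw [← compl_iInter, ← hUG, compl_compl]⟩

namespace IsFsigmaIn

variable {X : Type*} {t : TopologicalSpace X} {S T : Set X}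

theorem mono {t' : TopologicalSpace X} (hS : IsFsigmaIn t' S) (h : t ≤ t') : IsFsigmaIn t S :=
  let ⟨C, hC, hSC⟩ := hS
  ⟨C, fun n => (hC n).mono h, hSC⟩

theorem union (hS : IsFsigmaIn t S) (hT : IsFsigmaIn t T) : IsFsigmaIn t (S ∪ T) :=
  let ⟨C, hC, hSC⟩ := hS
  let ⟨D, hD, hTD⟩ := hT
  ⟨fun n => C n ∪ D n, fun n => (hC n).union (hD n), by rw [iUnion_union_distrib, hSC, hTD]⟩

theorem iUnion {S : ℕ → Set X} (hS : ∀ n, IsFsigmaIn t (S n)) : IsFsigmaIn t (⋃ n, S n) := by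
  choose C hC hSC using hS
  exact ⟨fun k => C k.unpair.1 k.unpair.2, fun k => hC _ _, by
    simp_rw [hSC]; exact (iUnion_unpair C).symm⟩

theorem preimage {Z : Type*} {tZ : TopologicalSpace Z} {f : X → Z} {S : Set Z}
    (hS : IsFsigmaIn tZ S) (hf : Continuous[t, tZ] f) : IsFsigmaIn t (f ⁻¹' S) :=
  let ⟨C, hC, hSC⟩ := hS
  ⟨fun n => f ⁻¹' C n, fun n => (hC n).preimage hf, by rw [hSC, preimage_iUnion]⟩

end IsFsigmaIn

theorem nhds_sorgenfreyTop (x : ℝ) : @nhds ℝ sorgenfreyTop x = 𝓝[≥] x := by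
  rw [sorgenfreyTop, TopologicalSpace.nhds_generateFrom]
  refine le_antisymm (fun s hs => ?_) (le_iInf₂ fun s ⟨hxs, a, b, hs⟩ => ?_)
  · obtain ⟨u, hxu, hus⟩ := mem_nhdsGE_iff_exists_Ico_subset.1 hs
    exact mem_iInf_of_mem (Ico x u) (mem_iInf_of_mem ⟨left_mem_Ico.2 hxu, x, u, rfl⟩
      (mem_principal.2 hus))
  · subst hs
    exact le_principal_iff.2 (mem_of_superset (Ico_mem_nhdsGE hxs.2) (Ico_subset_Ico_left hxs.1))

theorem isOpen_sorgenfreyTop_Ico (a b : ℝ) : IsOpen[sorgenfreyTop] (Ico a b) :=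
  TopologicalSpace.isOpen_generateFrom_of_mem ⟨a, b, rfl⟩

def sorgenfreyProdTop (Y : Type*) [TopologicalSpace Y] : TopologicalSpace (ℝ × Y) :=
  @instTopologicalSpaceProd ℝ Y sorgenfreyTop _

section SorgenfreyProd

variable {Y : Type*} [TopologicalSpace Y]

theorem nhds_sorgenfreyProdTop (p : ℝ × Y) :
    @nhds _ (sorgenfreyProdTop Y) p = 𝓝[≥] p.1 ×ˢ 𝓝 p.2 := by
  rw [sorgenfreyProdTop, @nhds_prod_eq ℝ Y sorgenfreyTop, nhds_sorgenfreyTop]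

theorem sorgenfreyProdTop_le : sorgenfreyProdTop Y ≤ instTopologicalSpaceProd :=
  (le_iff_nhds _ _).2 fun p => by
    rw [nhds_sorgenfreyProdTop, nhds_prod_eq]
    exact Filter.prod_mono nhdsWithin_le_nhds le_rfl

theorem mem_closure_sorgenfreyProdTop_iff {A : Set (ℝ × Y)} {q : ℝ × Y} :
    q ∈ closure[sorgenfreyProdTop Y] A ↔ q ∈ closure (Prod.fst ⁻¹' Ici q.1 ∩ A) := by
  rw [@mem_closure_iff_nhdsWithin_neBot _ (sorgenfreyProdTop Y), mem_closure_iff_nhdsWithin_neBot,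
    @nhdsWithin.eq_1 _ (sorgenfreyProdTop Y), nhds_sorgenfreyProdTop, nhdsWithin_inter',
    ← prod_univ, nhdsWithin_prod_eq, nhdsWithin_univ]

end SorgenfreyProd

theorem dist_fst_lt_and_dist_snd_lt {X Y : Type*} [PseudoMetricSpace X] [PseudoMetricSpace Y]
    {p q : X × Y} {ε : ℝ} (h : dist p q < ε) : dist p.1 q.1 < ε ∧ dist p.2 q.2 < ε := by
  rwa [Prod.dist_eq, max_lt_iff] at h

section SorgenfreyProdMetric

open Metric

variable {Y : Type*} [PseudoMetricSpace Y]

def sorgenfreyEdge (V : Set (ℝ × Y)) (r : ℝ) : Set (ℝ × Y) :=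
  {p | p ∉ interior V ∧ Ico p.1 (p.1 + r) ×ˢ ball p.2 r ⊆ V}

theorem closure_sorgenfreyEdge_subset (V : Set (ℝ × Y)) {r : ℝ} (hr : 0 < r) :
    closure[sorgenfreyProdTop Y] (sorgenfreyEdge V r) ⊆ V := by
  intro q hq
  rw [mem_closure_sorgenfreyProdTop_iff, Metric.mem_closure_iff] at hq
  obtain ⟨p, ⟨hqp, hpV, hboxp⟩, hpq⟩ := hq (r / 2) (half_pos hr)
  obtain ⟨hpq₁, hpq₂⟩ := dist_fst_lt_and_dist_snd_lt hpq
  rw [Real.dist_eq, abs_lt] at hpq₁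
  have hp₁ : p.1 = q.1 := by
    by_contra hne
    have hlt : q.1 < p.1 := lt_of_le_of_ne hqp (Ne.symm hne)
    obtain ⟨p', ⟨hqp', -, hboxp'⟩, hp'q⟩ := hq (min (p.1 - q.1) (r / 2)) (by positivity)
    obtain ⟨hp'q₁, hp'q₂⟩ := dist_fst_lt_and_dist_snd_lt hp'q
    rw [Real.dist_eq, lt_min_iff, abs_lt] at hp'q₁
    rw [lt_min_iff] at hp'q₂
    have hball : p.2 ∈ ball p'.2 r := by
      rw [mem_ball]
      linarith [dist_triangle p.2 q.2 p'.2, dist_comm p.2 q.2]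
    have hnhds : Ioo p'.1 (p'.1 + r) ×ˢ ball p'.2 r ∈ 𝓝 p :=
      prod_mem_nhds (Ioo_mem_nhds (by linarith) (by linarith)) (isOpen_ball.mem_nhds hball)
    exact hpV (mem_interior_iff_mem_nhds.2 (mem_of_superset hnhds
      ((Set.prod_mono Ioo_subset_Ico_self subset_rfl).trans hboxp')))
  exact hboxp ⟨⟨hp₁.le, by linarith⟩, by rw [mem_ball]; linarith⟩

theorem isFsigmaIn_of_isOpen_sorgenfreyProdTop {V : Set (ℝ × Y)}
    (hV : IsOpen[sorgenfreyProdTop Y] V) : IsFsigmaIn (sorgenfreyProdTop Y) V := by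
  have hcover : V = interior V ∪
      ⋃ n : ℕ, closure[sorgenfreyProdTop Y] (sorgenfreyEdge V (1 / (n + 1))) := by
    refine (union_subset interior_subset (iUnion_subset fun n =>
      closure_sorgenfreyEdge_subset V Nat.one_div_pos_of_nat)).antisymm' fun p hp => ?_
    by_cases hpi : p ∈ interior V
    · exact Or.inl hpi
    have hVp : V ∈ 𝓝[≥] p.1 ×ˢ 𝓝 p.2 :=
      nhds_sorgenfreyProdTop p ▸ @IsOpen.mem_nhds _ (sorgenfreyProdTop Y) _ _ hV hp
    obtain ⟨⟨u, ε⟩, ⟨hu, hε⟩, hbox⟩ :=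
      ((nhdsGE_basis_Ico p.1).prod Metric.nhds_basis_ball).mem_iff.1 hVp
    obtain ⟨n, hn⟩ := exists_nat_one_div_lt (lt_min (sub_pos.2 hu) hε)
    rw [lt_min_iff] at hn
    refine Or.inr (mem_iUnion.2 ⟨n, @subset_closure _ (sorgenfreyProdTop Y) _ p
      ⟨hpi, (Set.prod_mono ?_ ?_).trans hbox⟩⟩)
    · exact Ico_subset_Ico_right (by linarith)
    · exact ball_subset_ball hn.2.le
  rw [hcover]
  exact (isOpen_interior.isFsigmaIn.mono sorgenfreyProdTop_le).union
    (IsFsigmaIn.iUnion fun n => (@isClosed_closure _ (sorgenfreyProdTop Y) _).isFsigmaIn)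

end SorgenfreyProdMetric

theorem nhds_sorgenfreyPlaneTop (p : ℝ × ℝ) :
    @nhds _ sorgenfreyPlaneTop p = 𝓝[≥] p.1 ×ˢ 𝓝[≥] p.2 := by
  rw [sorgenfreyPlaneTop, @nhds_prod_eq ℝ ℝ sorgenfreyTop sorgenfreyTop, nhds_sorgenfreyTop,
    nhds_sorgenfreyTop]

theorem sorgenfreyPlaneTop_le : sorgenfreyPlaneTop ≤ sorgenfreyProdTop ℝ :=
  (le_iff_nhds _ _).2 fun p => by
    rw [nhds_sorgenfreyPlaneTop, nhds_sorgenfreyProdTop]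
    exact Filter.prod_mono le_rfl nhdsWithin_le_nhds

theorem mem_closure_sorgenfreyPlaneTop_iff {A : Set (ℝ × ℝ)} {q : ℝ × ℝ} :
    q ∈ closure[sorgenfreyPlaneTop] A ↔ q ∈ closure (Ici q ∩ A) := by
  rw [@mem_closure_iff_nhdsWithin_neBot _ sorgenfreyPlaneTop, mem_closure_iff_nhdsWithin_neBot,
    @nhdsWithin.eq_1 _ sorgenfreyPlaneTop, nhds_sorgenfreyPlaneTop, nhdsWithin_inter',
    ← Ici_prod_Ici, nhdsWithin_prod_eq]

theorem isClosed_sorgenfreyPlaneTop_of_isAntichain {A : Set (ℝ × ℝ)}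
    (hA : IsAntichain (· ≤ ·) A) : IsClosed[sorgenfreyPlaneTop] A := by
  refine (@closure_subset_iff_isClosed _ sorgenfreyPlaneTop A).1 fun q hq => ?_
  rw [mem_closure_sorgenfreyPlaneTop_iff] at hq
  -- a point of `A` strictly north-east of `q` would dominate a point of `A` closer to `q`
  have hedge : ∀ a ∈ A, q ≤ a → a.1 = q.1 ∨ a.2 = q.2 := by
    intro a haA hqa
    by_contra! hne
    obtain ⟨b, ⟨hba₁, hba₂⟩, -, hbA⟩ := mem_closure_iff.1 hq (Iio a.1 ×ˢ Iio a.2)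
      (isOpen_Iio.prod isOpen_Iio) ⟨hqa.1.lt_of_ne hne.1.symm, hqa.2.lt_of_ne hne.2.symm⟩
    exact hba₁.ne (congrArg Prod.fst (hA.eq hbA haA ⟨hba₁.le, hba₂.le⟩))
  have hchain₁ : IsChain (· ≤ ·) {x : ℝ × ℝ | x.1 = q.1} := fun x hx y hy _ =>
    (le_total x.2 y.2).imp (fun h => ⟨(hx.trans hy.symm).le, h⟩)
      (fun h => ⟨(hy.trans hx.symm).le, h⟩)
  have hchain₂ : IsChain (· ≤ ·) {x : ℝ × ℝ | x.2 = q.2} := fun x hx y hy _ =>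
    (le_total x.1 y.1).imp (fun h => ⟨h, (hx.trans hy.symm).le⟩)
      (fun h => ⟨h, (hy.trans hx.symm).le⟩)
  have hfin : (A ∩ {x | x.1 = q.1} ∪ A ∩ {x | x.2 = q.2}).Finite :=
    (inter_subsingleton_of_isAntichain_of_isChain hA hchain₁).finite.union
      (inter_subsingleton_of_isAntichain_of_isChain hA hchain₂).finite
  have hsub : Ici q ∩ A ⊆ A ∩ {x | x.1 = q.1} ∪ A ∩ {x | x.2 = q.2} := fun a ⟨hqa, haA⟩ =>
    (hedge a haA hqa).imp (fun h => ⟨haA, h⟩) (fun h => ⟨haA, h⟩)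
  exact (closure_minimal hsub hfin.isClosed hq).elim (·.1) (·.1)

theorem isClosed_sorgenfreyPlaneTop_of_isAntichain_inter {A : Set (ℝ × ℝ)} {r : ℝ} (hr : 0 < r)
    (hA : ∀ q : ℝ × ℝ, IsAntichain (· ≤ ·) (Ico q.1 (q.1 + r) ×ˢ Ico q.2 (q.2 + r) ∩ A)) :
    IsClosed[sorgenfreyPlaneTop] A := by
  refine (@closure_subset_iff_isClosed _ sorgenfreyPlaneTop A).1 fun q hq => ?_
  have hB : IsOpen[sorgenfreyPlaneTop] (Ico q.1 (q.1 + r) ×ˢ Ico q.2 (q.2 + r)) :=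
    @IsOpen.prod ℝ ℝ sorgenfreyTop sorgenfreyTop _ _ (isOpen_sorgenfreyTop_Ico _ _)
      (isOpen_sorgenfreyTop_Ico _ _)
  have hqB : q ∈ Ico q.1 (q.1 + r) ×ˢ Ico q.2 (q.2 + r) :=
    ⟨⟨le_rfl, by linarith⟩, le_rfl, by linarith⟩
  have hqBA := @IsOpen.inter_closure _ sorgenfreyPlaneTop _ A hB q ⟨hqB, hq⟩
  exact (@IsClosed.closure_subset _ sorgenfreyPlaneTop _
    (isClosed_sorgenfreyPlaneTop_of_isAntichain (hA q)) q hqBA).2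

local notation "interior[" t "]" => @interior _ t

def sorgenfreyCorner (U : Set (ℝ × ℝ)) (r : ℝ) : Set (ℝ × ℝ) :=
  {p | p ∉ interior[sorgenfreyProdTop ℝ] U ∧
    p.swap ∉ interior[sorgenfreyProdTop ℝ] (Prod.swap ⁻¹' U) ∧
    Ico p.1 (p.1 + r) ×ˢ Ico p.2 (p.2 + r) ⊆ U}

theorem mem_interior_sorgenfreyProdTop_Ico_prod_Ico {a b : ℝ × ℝ} {r : ℝ} (h₁ : a.1 ≤ b.1)
    (h₁' : b.1 < a.1 + r) (h₂ : a.2 < b.2) (h₂' : b.2 < a.2 + r) :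
    b ∈ interior[sorgenfreyProdTop ℝ] (Ico a.1 (a.1 + r) ×ˢ Ico a.2 (a.2 + r)) := by
  rw [@mem_interior_iff_mem_nhds _ (sorgenfreyProdTop ℝ), nhds_sorgenfreyProdTop]
  exact prod_mem_prod (mem_of_superset (Ico_mem_nhdsGE h₁') (Ico_subset_Ico_left h₁))
    (mem_of_superset (Ioo_mem_nhds h₂ h₂') Ioo_subset_Ico_self)

theorem eq_of_mem_sorgenfreyCorner {U : Set (ℝ × ℝ)} {r : ℝ} {a b : ℝ × ℝ}
    (ha : a ∈ sorgenfreyCorner U r) (hb : b ∈ sorgenfreyCorner U r) (hab : a ≤ b)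
    (h₁ : b.1 < a.1 + r) (h₂ : b.2 < a.2 + r) : a = b := by
  rcases hab.1.lt_or_eq with hlt₁ | heq₁
  · have hbox : Ico a.2 (a.2 + r) ×ˢ Ico a.1 (a.1 + r) ⊆ Prod.swap ⁻¹' U := by
      rw [← preimage_swap_prod]
      exact preimage_mono ha.2.2
    exact absurd (@interior_mono _ (sorgenfreyProdTop ℝ) _ _ hbox b.swap
      (mem_interior_sorgenfreyProdTop_Ico_prod_Ico (a := a.swap) (b := b.swap) hab.2 h₂ hlt₁ h₁))
      hb.2.1
  rcases hab.2.lt_or_eq with hlt₂ | heq₂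
  · exact absurd (@interior_mono _ (sorgenfreyProdTop ℝ) _ _ ha.2.2 b
      (mem_interior_sorgenfreyProdTop_Ico_prod_Ico hab.1 h₁ hlt₂ h₂)) hb.1
  exact Prod.ext heq₁ heq₂

theorem isClosed_sorgenfreyCorner (U : Set (ℝ × ℝ)) {r : ℝ} (hr : 0 < r) :
    IsClosed[sorgenfreyPlaneTop] (sorgenfreyCorner U r) :=
  isClosed_sorgenfreyPlaneTop_of_isAntichain_inter hr fun _ a ha b hb hne hab =>
    hne (eq_of_mem_sorgenfreyCorner ha.2 hb.2 hab (by linarith [ha.1.1.1, hb.1.1.2])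
      (by linarith [ha.1.2.1, hb.1.2.2]))

theorem eq_union_sorgenfreyCorner {U : Set (ℝ × ℝ)} (hU : IsOpen[sorgenfreyPlaneTop] U) :
    U = interior[sorgenfreyProdTop ℝ] U ∪
      Prod.swap ⁻¹' interior[sorgenfreyProdTop ℝ] (Prod.swap ⁻¹' U) ∪
      ⋃ n : ℕ, sorgenfreyCorner U (1 / (n + 1)) := by
  refine Subset.antisymm (fun p hp => ?_) ?_
  · by_cases hp₁ : p ∈ interior[sorgenfreyProdTop ℝ] U
    · exact Or.inl (Or.inl hp₁)
    by_cases hp₂ : p.swap ∈ interior[sorgenfreyProdTop ℝ] (Prod.swap ⁻¹' U)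
    · exact Or.inl (Or.inr hp₂)
    have hUp : U ∈ 𝓝[≥] p.1 ×ˢ 𝓝[≥] p.2 :=
      nhds_sorgenfreyPlaneTop p ▸ @IsOpen.mem_nhds _ sorgenfreyPlaneTop _ _ hU hp
    obtain ⟨⟨u, v⟩, ⟨hu, hv⟩, hbox⟩ :=
      ((nhdsGE_basis_Ico p.1).prod (nhdsGE_basis_Ico p.2)).mem_iff.1 hUp
    obtain ⟨n, hn⟩ := exists_nat_one_div_lt (lt_min (sub_pos.2 hu) (sub_pos.2 hv))
    rw [lt_min_iff] at hn
    refine Or.inr (mem_iUnion.2 ⟨n, hp₁, hp₂, (Set.prod_mono ?_ ?_).trans hbox⟩)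
    · exact Ico_subset_Ico_right (by linarith)
    · exact Ico_subset_Ico_right (by linarith)
  · rintro p ((hp | hp) | hp)
    · exact @interior_subset _ (sorgenfreyProdTop ℝ) _ p hp
    · exact @interior_subset _ (sorgenfreyProdTop ℝ) _ p.swap hp
    · obtain ⟨n, -, -, hbox⟩ := mem_iUnion.1 hp
      have hn : (0 : ℝ) < 1 / (n + 1) := Nat.one_div_pos_of_nat
      exact hbox ⟨⟨le_rfl, by linarith⟩, le_rfl, by linarith⟩

theorem isFsigmaIn_of_isOpen_sorgenfreyPlaneTop {U : Set (ℝ × ℝ)}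
    (hU : IsOpen[sorgenfreyPlaneTop] U) : IsFsigmaIn sorgenfreyPlaneTop U := by
  have hint : ∀ V, IsFsigmaIn sorgenfreyPlaneTop (interior[sorgenfreyProdTop ℝ] V) := fun V =>
    (isFsigmaIn_of_isOpen_sorgenfreyProdTop (@isOpen_interior _ (sorgenfreyProdTop ℝ) V)).mono
      sorgenfreyPlaneTop_le
  have hswap : Continuous[sorgenfreyPlaneTop, sorgenfreyPlaneTop] Prod.swap :=
    @continuous_swap ℝ ℝ sorgenfreyTop sorgenfreyTop
  rw [eq_union_sorgenfreyCorner hU]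
  exact ((hint U).union ((hint _).preimage hswap)).union
    (IsFsigmaIn.iUnion fun n => (isClosed_sorgenfreyCorner U Nat.one_div_pos_of_nat).isFsigmaIn)

open TopologicalSpace in
theorem secondCountableTopology_of_separableSpace {X : Type*} [TopologicalSpace X]
    [PseudoMetrizableSpace X] [SeparableSpace X] : SecondCountableTopology X := by
  let := pseudoMetrizableSpaceUniformity X
  have := pseudoMetrizableSpaceUniformity_countably_generated X
  exact UniformSpace.secondCountable_of_separable X

open Cardinal TopologicalSpace in
theorem mk_setOf_isFsigmaIn_le_continuum {X : Type*} [t : TopologicalSpace X]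
    [SecondCountableTopology X] : #{S : Set X | IsFsigmaIn t S} ≤ 𝔠 := by
  set B := countableBasis X
  have hB : ∀ U : Set X, IsOpen U → ⋃ (s : B) (_ : (s : Set X) ⊆ U), (s : Set X) = U := by
    refine fun U hU => Subset.antisymm (iUnion₂_subset fun _ hs => hs) fun x hx => ?_
    obtain ⟨s, hsB, hxs, hsU⟩ := (isBasis_countableBasis X).exists_subset_of_mem_open hx hU
    exact mem_iUnion₂.2 ⟨⟨s, hsB⟩, hsU, hxs⟩
  -- a countable family of closed sets is coded by the basic open sets inside their complements
  let decode : Set (ℕ × B) → Set X := fun c => ⋃ n, (⋃ (s : B) (_ : (n, s) ∈ c), (s : Set X))ᶜ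
  have hrange : {S : Set X | IsFsigmaIn t S} ⊆ range decode := by
    rintro S ⟨C, hC, rfl⟩
    exact ⟨{x | (x.2 : Set X) ⊆ (C x.1)ᶜ}, iUnion_congr fun n => by
      simp only [mem_ofPred_eq, hB _ (hC n).isOpen_compl, compl_compl]⟩
  have := (countable_countableBasis X).to_subtype
  calc #{S : Set X | IsFsigmaIn t S} ≤ #(range decode) := mk_le_mk_of_subset hrange
    _ ≤ #(Set (ℕ × B)) := mk_range_le
    _ ≤ 2 ^ ℵ₀ := by rw [mk_set]; exact power_le_power_left two_ne_zero mk_le_aleph0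
    _ = 𝔠 := two_power_aleph0

theorem isAntichain_antidiagonal : IsAntichain (· ≤ ·) {p : ℝ × ℝ | p.1 + p.2 = 0} :=
  fun a ha b hb hne hab => hne (Prod.ext (hab.1.antisymm (by linarith [hab.2, ha.out, hb.out]))
    (hab.2.antisymm (by linarith [hab.1, ha.out, hb.out])))

open Cardinal in
theorem not_OBProperty_sorgenfreyPlaneTop : ¬ @OBProperty (ℝ × ℝ) sorgenfreyPlaneTop := by
  rintro ⟨t, -, hmetr, hsep, hFσ⟩
  have := @secondCountableTopology_of_separableSpace _ t hmetr.toPseudoMetrizableSpace hsep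
  have hclosed : ∀ T : Set ℝ, IsLocallyClosedIn sorgenfreyPlaneTop ((fun x => (x, -x)) '' T) :=
    fun T => ⟨univ, _, @isOpen_univ _ sorgenfreyPlaneTop,
      isClosed_sorgenfreyPlaneTop_of_isAntichain (isAntichain_antidiagonal.subset
        (image_subset_iff (f := fun x : ℝ => (x, -x)).2 fun x _ => add_neg_cancel x)),
      (univ_inter _).symm⟩
  let embed : Set ℝ → {S : Set (ℝ × ℝ) | IsFsigmaIn t S} := fun T => ⟨_, hFσ _ (hclosed T)⟩
  have hembed : Function.Injective embed := fun T T' h =>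
    (image_injective.2 fun x y hxy => congrArg Prod.fst hxy) (congrArg Subtype.val h)
  have := (mk_le_of_injective hembed).trans (@mk_setOf_isFsigmaIn_le_continuum _ t this)
  rw [mk_set, mk_real] at this
  exact (cantor 𝔠).not_ge this

/-- The Sorgenfrey plane is perfect (every open set is F_σ) but does not
possess the OB-property. -/
theorem statement4 :
    (∀ U : Set (ℝ × ℝ), IsOpen[sorgenfreyPlaneTop] U → IsFsigmaIn sorgenfreyPlaneTop U) ∧
    ¬ @OBProperty (ℝ × ℝ) sorgenfreyPlaneTop :=
  ⟨fun _ => isFsigmaIn_of_isOpen_sorgenfreyPlaneTop, not_OBProperty_sorgenfreyPlaneTop⟩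

end Selectors
end

section
/- Let X be an infinite Hausdorff topological space and let 𝒰 be an open ω-cover of X. Then the family S(𝒰) = {f_{U,g} + g : U ∈ 𝒰, g ∈ USC*_p(X)} is contained in USC*_p(X) and is upper dense in USC*_p(X). -/
open Set Filter Topology

namespace Selectors

variable {X : Type*}

/-! Given `f ≤ t` in `USC*_p(X)` and a finite set `I`, choose `U ∈ 𝒰` with `I ⊆ U` and put
`g = f + 1_I · (t - f)`. The bump `1_I · (t - f)` is nonnegative and supported on a finite, hence
closed, set, so it is upper semicontinuous; and `f_{U,g}` vanishes on `U`. Hence `f_{U,g} + g`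
agrees with `t` on `I`, lies above `f`, and differs from `f` by `f_{U,g} + 1_I · (t - f)`, which
is again in `USC*_p(X)`. Since `I` was arbitrary, `t` is in the pointwise closure. -/

theorem mem_closure_of_forall_finite_agree {ι : Type*} {A : ι → Type*}
    [∀ i, TopologicalSpace (A i)] {S : Set (∀ i, A i)} {t : ∀ i, A i}
    (h : ∀ I : Set ι, I.Finite → ∃ s ∈ S, ∀ i ∈ I, s i = t i) : t ∈ closure S := by
  rw [mem_closure_iff_nhds]
  intro N hN
  rw [nhds_pi, Filter.mem_pi] at hN
  obtain ⟨I, hI, V, hV, hVN⟩ := hN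
  obtain ⟨s, hs, hst⟩ := h I hI
  exact ⟨s, hVN fun i hi => (hst i hi).symm ▸ mem_of_mem_nhds (hV i), hs⟩

theorem upperSemicontinuous_indicator_of_finite [TopologicalSpace X] [T1Space X] {β : Type*}
    [Preorder β] [Zero β] {I : Set X} (hI : I.Finite) {φ : X → β} (hφ : ∀ x ∈ I, 0 ≤ φ x) :
    UpperSemicontinuous (I.indicator φ) := by
  intro x y hxy
  -- off the closed set `I \ {x}` the indicator is at most its value at `x`
  have hopen : IsOpen (I \ {x})ᶜ := (hI.subset sdiff_subset).isClosed.isOpen_compl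
  filter_upwards [hopen.mem_nhds fun h => h.2 rfl] with z hz
  by_cases hzx : z = x
  · exact hzx ▸ hxy
  rw [indicator_of_notMem fun hzI => hz ⟨hzI, hzx⟩]
  by_cases hxI : x ∈ I
  · rw [indicator_of_mem hxI] at hxy
    exact (hφ x hxI).trans_lt hxy
  · rwa [indicator_of_notMem hxI] at hxy

section USCb

variable [TopologicalSpace X]

theorem mem_USCb_iff {f : X → ℝ} :
    f ∈ USCb X ↔ UpperSemicontinuous f ∧ ∃ M, ∀ x, |f x| ≤ M := by
  rw [upperSemicontinuous_iff_isOpen_preimage]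
  rfl

theorem add_mem_USCb {f g : X → ℝ} (hf : f ∈ USCb X) (hg : g ∈ USCb X) : f + g ∈ USCb X := by
  obtain ⟨hfu, M, hM⟩ := mem_USCb_iff.1 hf
  obtain ⟨hgu, N, hN⟩ := mem_USCb_iff.1 hg
  exact mem_USCb_iff.2
    ⟨hfu.add hgu, M + N, fun x => (abs_add_le _ _).trans (add_le_add (hM x) (hN x))⟩

theorem indicator_const_mem_USCb {C : Set X} (hC : IsClosed C) {c : ℝ} (hc : 0 ≤ c) :
    C.indicator (fun _ => c) ∈ USCb X :=
  mem_USCb_iff.2 ⟨hC.upperSemicontinuous_indicator hc, c, fun x => by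
    by_cases hx : x ∈ C <;> simp [hx, abs_of_nonneg hc, hc]⟩

theorem indicator_mem_USCb_of_finite [T1Space X] {I : Set X} (hI : I.Finite) {φ : X → ℝ}
    (hφ : ∀ x ∈ I, 0 ≤ φ x) : I.indicator φ ∈ USCb X := by
  obtain ⟨M, hM⟩ := (hI.image fun x => |φ x|).bddAbove
  refine mem_USCb_iff.2 ⟨upperSemicontinuous_indicator_of_finite hI hφ, max M 0, fun x => ?_⟩
  by_cases hx : x ∈ I
  · rw [indicator_of_mem hx]
    exact (hM (mem_image_of_mem _ hx)).trans (le_max_left _ _)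
  · simp [hx]

end USCb

theorem one_add_iSup_abs_nonneg (g : X → ℝ) : 0 ≤ 1 + ⨆ y, |g y| :=
  add_nonneg zero_le_one (Real.iSup_nonneg fun _ => abs_nonneg _)

theorem fU_nonneg (U : Set X) (g : X → ℝ) : 0 ≤ fU U g :=
  indicator_nonneg fun _ _ => one_add_iSup_abs_nonneg g

theorem fU_eq_zero_of_mem {U : Set X} (g : X → ℝ) {x : X} (hx : x ∈ U) : fU U g x = 0 :=
  indicator_of_notMem (notMem_compl_iff.2 hx) _

theorem fU_mem_USCb [TopologicalSpace X] {U : Set X} (hU : IsOpen U) (g : X → ℝ) :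
    fU U g ∈ USCb X :=
  indicator_const_mem_USCb hU.isClosed_compl (one_add_iSup_abs_nonneg g)

theorem exists_fU_add_eqOn [TopologicalSpace X] [T1Space X] {f t : X → ℝ} (hf : f ∈ USCb X)
    {I U : Set X} (hft : ∀ x ∈ I, f x ≤ t x) (hI : I.Finite) (hU : IsOpen U) (hIU : I ⊆ U) :
    ∃ g ∈ USCb X, f ≤ fU U g + g ∧ fU U g + g - f ∈ USCb X ∧ EqOn (fU U g + g) t I := by
  set s := I.indicator (t - f)
  have htf_nonneg : ∀ x ∈ I, 0 ≤ (t - f) x := fun x hx => sub_nonneg.2 (hft x hx)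
  have hs : s ∈ USCb X := indicator_mem_USCb_of_finite hI htf_nonneg
  refine ⟨f + s, add_mem_USCb hf hs, fun x => ?_, ?_, fun x hx => ?_⟩
  · have h₁ : 0 ≤ fU U (f + s) x := fU_nonneg U (f + s) x
    have h₂ : 0 ≤ s x := indicator_nonneg htf_nonneg x
    simp only [Pi.add_apply]
    linarith
  · rw [add_sub_assoc, add_sub_cancel_left]
    exact add_mem_USCb (fU_mem_USCb hU _) hs
  · simp [fU_eq_zero_of_mem _ (hIU hx), s, indicator_of_mem hx]

theorem statement5_general {X : Type*} [TopologicalSpace X] [T2Space X]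
    (𝒰 : Set (Set X)) (h𝒰 : 𝒰 ∈ OpenKindCovers X CoverKind.omega) :
    SU 𝒰 ⊆ USCb X ∧ UpperDenseIn (SU 𝒰) (USCb X) := by
  obtain ⟨h𝒰_open, -, -, h𝒰_finite⟩ := h𝒰
  have hSU : SU 𝒰 ⊆ USCb X := by
    rintro _ ⟨U, hU, g, hg, rfl⟩
    exact add_mem_USCb (fU_mem_USCb (h𝒰_open U hU) g) hg
  refine ⟨hSU, hSU, fun f hf t ⟨_, hft⟩ => mem_closure_of_forall_finite_agree ?_⟩
  intro I hI
  obtain ⟨U, hU, hIU⟩ := h𝒰_finite I hI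
  obtain ⟨g, hg, hfh, hdiff, heq⟩ :=
    exists_fU_add_eqOn hf (fun x _ => hft x) hI (h𝒰_open U hU) hIU
  exact ⟨_, ⟨⟨U, hU, g, hg, rfl⟩, hfh, hdiff⟩, heq⟩

/-- If 𝒰 is an open ω-cover of an infinite Hausdorff space X, then
S(𝒰) = {f_{U,g} + g : U ∈ 𝒰, g ∈ USC*_p(X)} ⊆ USC*_p(X) is upper dense in USC*_p(X). -/
theorem statement5 {X : Type*} [TopologicalSpace X] [T2Space X] [Infinite X]
    (𝒰 : Set (Set X)) (h𝒰 : 𝒰 ∈ OpenKindCovers X CoverKind.omega) :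
    SU 𝒰 ⊆ USCb X ∧ UpperDenseIn (SU 𝒰) (USCb X) :=
  statement5_general 𝒰 h𝒰

end Selectors
end

section
/- Let X be an infinite Hausdorff topological space and let 𝒰 be an open γ-cover of X. Then the family S(𝒰) = {f_{U,g} + g : U ∈ 𝒰, g ∈ USC*_p(X)} is contained in USC*_p(X) and is upper sequentially dense in USC*_p(X). -/
open Set Filter Topology

namespace Selectors

variable {X : Type*}

theorem tendsto_fU_add {u : ℕ → Set X} (hu : ∀ x, ∀ᶠ n in atTop, x ∈ u n) (g : X → ℝ) :
    Tendsto (fun n => fU (u n) g + g) atTop (𝓝 g) := by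
  refine tendsto_pi_nhds.2 fun x => tendsto_const_nhds.congr' ?_
  filter_upwards [hu x] with n hn
  simp [fU, hn]

theorem exists_seq_eventually_mem_of_gamma {𝒰 : Set (Set X)} (hinf : 𝒰.Infinite)
    (hgam : ∀ x : X, {U ∈ 𝒰 | x ∉ U}.Finite) :
    ∃ u : ℕ → Set X, (∀ n, u n ∈ 𝒰) ∧ ∀ x, ∀ᶠ n in atTop, x ∈ u n := by
  let e : ℕ ↪ 𝒰 := hinf.natEmbedding
  refine ⟨fun n => e n, fun n => (e n).2, fun x => ?_⟩
  have hinj : Function.Injective fun n => (e n : Set X) :=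
    Subtype.coe_injective.comp e.injective
  rw [← Nat.cofinite_eq_atTop]
  filter_upwards [hinj.tendsto_cofinite.eventually (hgam x).eventually_cofinite_notMem]
    with n hn
  by_contra hx
  exact hn ⟨(e n).2, hx⟩

section

variable [TopologicalSpace X]

theorem isUSCb_iff {f : X → ℝ} :
    IsUSCb f ↔ UpperSemicontinuous f ∧ ∃ M : ℝ, ∀ x, |f x| ≤ M := by
  rw [IsUSCb, upperSemicontinuous_iff_isOpen_preimage]
  rfl

theorem IsUSCb.add {f g : X → ℝ} (hf : IsUSCb f) (hg : IsUSCb g) : IsUSCb (f + g) := by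
  obtain ⟨hf, Mf, hMf⟩ := isUSCb_iff.1 hf
  obtain ⟨hg, Mg, hMg⟩ := isUSCb_iff.1 hg
  exact isUSCb_iff.2
    ⟨hf.add hg, Mf + Mg, fun x => (abs_add_le _ _).trans (add_le_add (hMf x) (hMg x))⟩

theorem isUSCb_indicator_compl {U : Set X} (hU : IsOpen U) {c : ℝ} (hc : 0 ≤ c) :
    IsUSCb (Uᶜ.indicator fun _ => c) := by
  refine isUSCb_iff.2 ⟨hU.isClosed_compl.upperSemicontinuous_indicator hc, c, fun x => ?_⟩
  rw [abs_of_nonneg (indicator_nonneg (fun _ _ => hc) x)]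
  exact indicator_le_self' (fun _ _ => hc) x

theorem isUSCb_fU {U : Set X} (hU : IsOpen U) (g : X → ℝ) : IsUSCb (fU U g) :=
  isUSCb_indicator_compl hU (one_add_iSup_abs_nonneg g)

theorem SU_subset_USCb {𝒰 : Set (Set X)} (hopen : ∀ U ∈ 𝒰, IsOpen U) : SU 𝒰 ⊆ USCb X := by
  rintro _ ⟨U, hU, g, hg, rfl⟩
  exact (isUSCb_fU (hopen U hU) g).add hg

end

theorem statement6_general {X : Type*} [TopologicalSpace X]
    (𝒰 : Set (Set X)) (h𝒰 : 𝒰 ∈ OpenKindCovers X CoverKind.gamma) :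
    SU 𝒰 ⊆ USCb X ∧ UpperSeqDenseIn (SU 𝒰) (USCb X) := by
  obtain ⟨hopen, -, hinf, hgam⟩ := h𝒰
  have hsub := SU_subset_USCb hopen
  refine ⟨hsub, hsub, fun f hf => ?_⟩
  obtain ⟨u, hu𝒰, hu⟩ := exists_seq_eventually_mem_of_gamma hinf hgam
  refine ⟨fun n => fU (u n) f + f, fun n => ⟨⟨u n, hu𝒰 n, f, hf, rfl⟩, ?_, ?_⟩,
    tendsto_fU_add hu f⟩
  · exact le_add_of_nonneg_left (fU_nonneg _ _)
  · rw [add_sub_cancel_right]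
    exact isUSCb_fU (hopen _ (hu𝒰 n)) f

/-- If 𝒰 is an open γ-cover of an infinite Hausdorff space X, then
S(𝒰) = {f_{U,g} + g : U ∈ 𝒰, g ∈ USC*_p(X)} ⊆ USC*_p(X) is upper sequentially dense
in USC*_p(X). -/
theorem statement6 {X : Type*} [TopologicalSpace X] [T2Space X] [Infinite X]
    (𝒰 : Set (Set X)) (h𝒰 : 𝒰 ∈ OpenKindCovers X CoverKind.gamma) :
    SU 𝒰 ⊆ USCb X ∧ UpperSeqDenseIn (SU 𝒰) (USCb X) :=
  statement6_general 𝒰 h𝒰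

end Selectors
end
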